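/- arXiv:2404.18765 — 2 statements merged into one kernel-verified Lean document; each statement's English description precedes it below -/
import Mathlib

section
/- Under assumptions (A1)–(A4) with μ > 2, for every (f1,f2), (g1,g2) ∈ 𝒦 and every η ≥ r0 one has |E2(η; f1,f2) − E2(η; g1,g2)| ≤ Ẽ2·‖(f1,f2) − (g1,g2)‖, where Ẽ2 = 2a·[Ñ2/(L2m·(μ−2)·r0^(μ−2)) + N2M·L̃2/(L2m²·(3μ−2)·r0^(3μ−2))] + D2·[K̃2/(H_inf·L2m·(2μ+ν−1)·r0^(2μ+ν−1)) + (K2M/(H_inf·L2m))·(H̃/(H_inf·(2μ+ν−1)·r0^(2μ+ν−1)) + L̃2/(L2m·(3μ+ν−1)·r0^(3μ+ν−1)))], H_inf = (K1m/(μ+ν−1))·(s0^(−(μ+ν−1)) − r0^(−(μ+ν−1))), and H̃ = (K̃1·s0^(−(μ+ν−1)) + K̃2·r0^(−(μ+ν−1)))/(μ+ν−1). -/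
open MeasureTheory Filter Topology

noncomputable section

/-- The bundle of fixed constants of the problem. -/
structure Cst where
  nu : ℝ
  mu : ℝ
  a : ℝ
  D1 : ℝ
  D2 : ℝ
  Q : ℝ
  D1s : ℝ
  D2s : ℝ
  L1m : ℝ
  L1M : ℝ
  N1m : ℝ
  N1M : ℝ
  K1m : ℝ
  K1M : ℝ
  L2m : ℝ
  L2M : ℝ
  N2m : ℝ
  N2M : ℝ
  K2m : ℝ
  K2M : ℝ
  Lt1 : ℝ
  Nt1 : ℝ
  Kt1 : ℝ
  Lt2 : ℝ
  Nt2 : ℝ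
  Kt2 : ℝ

/-- The space `C[s0,r0]`, modeled as real functions continuous on `[s0,r0]`. -/
def C1 (s0 r0 : ℝ) : Set (ℝ → ℝ) := {f | ContinuousOn f (Set.Icc s0 r0)}

/-- The set `ℳ ⊆ C_b[r0,∞)`: bounded continuous functions on `[r0,∞)` with
`f(r0) = 0` and `f(η) → -1` as `η → ∞`. -/
def Mset (r0 : ℝ) : Set (ℝ → ℝ) :=
  {f | ContinuousOn f (Set.Ici r0) ∧ (∃ C, ∀ x ∈ Set.Ici r0, |f x| ≤ C) ∧
    f r0 = 0 ∧ Tendsto f atTop (𝓝 (-1))}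

/-- Sup norm of `f` over the set `S`. -/
def supOn (S : Set ℝ) (f : ℝ → ℝ) : ℝ := ⨆ x : S, |f x.1|

/-- Norm of the difference of two pairs in `𝒦 = C[s0,r0] × ℳ`. -/
def pairNorm (s0 r0 : ℝ) (f1 f2 g1 g2 : ℝ → ℝ) : ℝ :=
  max (supOn (Set.Icc s0 r0) (f1 - g1)) (supOn (Set.Ici r0) (f2 - g2))

/-- Positivity assumptions on all the fixed constants and on `s0, r0`. -/
def PosC (c : Cst) (s0 r0 : ℝ) : Prop :=
  0 < c.a ∧ 0 < c.nu ∧ c.nu < 1 ∧ 2 < c.mu ∧ 0 < s0 ∧ s0 < r0 ∧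
  0 < c.D1 ∧ 0 < c.D2 ∧ 0 < c.Q ∧ 0 < c.D1s ∧ 0 < c.D2s ∧
  0 < c.L1m ∧ 0 < c.L1M ∧ 0 < c.N1m ∧ 0 < c.N1M ∧ 0 < c.K1m ∧ 0 < c.K1M ∧
  0 < c.L2m ∧ 0 < c.L2M ∧ 0 < c.N2m ∧ 0 < c.N2M ∧ 0 < c.K2m ∧ 0 < c.K2M ∧
  0 < c.Lt1 ∧ 0 < c.Nt1 ∧ 0 < c.Kt1 ∧ 0 < c.Lt2 ∧ 0 < c.Nt2 ∧ 0 < c.Kt2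

/-- Positivity assumptions on all the fixed constants (no `s0, r0`). -/
def PosCst (c : Cst) : Prop :=
  0 < c.a ∧ 0 < c.nu ∧ c.nu < 1 ∧ 2 < c.mu ∧
  0 < c.D1 ∧ 0 < c.D2 ∧ 0 < c.Q ∧ 0 < c.D1s ∧ 0 < c.D2s ∧
  0 < c.L1m ∧ 0 < c.L1M ∧ 0 < c.N1m ∧ 0 < c.N1M ∧ 0 < c.K1m ∧ 0 < c.K1M ∧
  0 < c.L2m ∧ 0 < c.L2M ∧ 0 < c.N2m ∧ 0 < c.N2M ∧ 0 < c.K2m ∧ 0 < c.K2M ∧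
  0 < c.Lt1 ∧ 0 < c.Nt1 ∧ 0 < c.Kt1 ∧ 0 < c.Lt2 ∧ 0 < c.Nt2 ∧ 0 < c.Kt2

/-- Assumptions (A1)–(A4): continuity of the images of `L, N, K`, the two-sided
bounds and the Lipschitz bounds. -/
def Assum (c : Cst) (s0 r0 : ℝ) (L1 N1 K1 L2 N2 K2 : (ℝ → ℝ) → ℝ → ℝ) : Prop :=
  (∀ f1 ∈ C1 s0 r0,
    ContinuousOn (L1 f1) (Set.Icc s0 r0) ∧ ContinuousOn (N1 f1) (Set.Icc s0 r0) ∧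
      ContinuousOn (K1 f1) (Set.Icc s0 r0)) ∧
  (∀ f2 ∈ Mset r0,
    ContinuousOn (L2 f2) (Set.Ici r0) ∧ ContinuousOn (N2 f2) (Set.Ici r0) ∧
      ContinuousOn (K2 f2) (Set.Ici r0)) ∧
  (∀ f1 ∈ C1 s0 r0, ∀ η ∈ Set.Icc s0 r0,
    c.L1m * η ^ c.mu ≤ L1 f1 η ∧ L1 f1 η ≤ c.L1M * η ^ c.mu ∧
    c.N1m * η ^ (-c.mu) ≤ N1 f1 η ∧ N1 f1 η ≤ c.N1M * η ^ (-c.mu) ∧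
    c.K1m * η ^ (-c.mu) ≤ K1 f1 η ∧ K1 f1 η ≤ c.K1M * η ^ (-c.mu)) ∧
  (∀ f2 ∈ Mset r0, ∀ η ∈ Set.Ici r0,
    c.L2m * η ^ c.mu ≤ L2 f2 η ∧ L2 f2 η ≤ c.L2M * η ^ c.mu ∧
    c.N2m * η ^ (-c.mu) ≤ N2 f2 η ∧ N2 f2 η ≤ c.N2M * η ^ (-c.mu) ∧
    c.K2m * η ^ (-c.mu) ≤ K2 f2 η ∧ K2 f2 η ≤ c.K2M * η ^ (-c.mu)) ∧
  (∀ f1 ∈ C1 s0 r0, ∀ g1 ∈ C1 s0 r0, ∀ η ∈ Set.Icc s0 r0,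
    |L1 f1 η - L1 g1 η| ≤ c.Lt1 * supOn (Set.Icc s0 r0) (f1 - g1) ∧
    |N1 f1 η - N1 g1 η| ≤ c.Nt1 * supOn (Set.Icc s0 r0) (f1 - g1) ∧
    |K1 f1 η - K1 g1 η| ≤ c.Kt1 * η ^ (-c.mu) * supOn (Set.Icc s0 r0) (f1 - g1)) ∧
  (∀ f2 ∈ Mset r0, ∀ g2 ∈ Mset r0, ∀ η ∈ Set.Ici r0,
    |L2 f2 η - L2 g2 η| ≤ c.Lt2 * supOn (Set.Ici r0) (f2 - g2) ∧
    |N2 f2 η - N2 g2 η| ≤ c.Nt2 * supOn (Set.Ici r0) (f2 - g2) ∧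
    |K2 f2 η - K2 g2 η| ≤ c.Kt2 * η ^ (-c.mu) * supOn (Set.Ici r0) (f2 - g2))

/-- `H(f1,f2) = ∫_{s0}^{r0} K(f1)(v)/v^ν dv + ∫_{r0}^{∞} K(f2)(v)/v^ν dv`. -/
def Hf (c : Cst) (s0 r0 : ℝ) (L1 N1 K1 L2 N2 K2 : (ℝ → ℝ) → ℝ → ℝ) (f1 f2 : ℝ → ℝ) : ℝ :=
  (∫ v in s0..r0, K1 f1 v / v ^ c.nu) + ∫ v in Set.Ioi r0, K2 f2 v / v ^ c.nu

/-- `E1(η; f1,f2)`. -/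
def E1f (c : Cst) (s0 r0 : ℝ) (L1 N1 K1 L2 N2 K2 : (ℝ → ℝ) → ℝ → ℝ) (f1 f2 : ℝ → ℝ)
    (η : ℝ) : ℝ :=
  Real.exp (-(∫ v in s0..η,
    (2 * c.a * v * (N1 f1 v / L1 f1 v)
      + c.D1 / Hf c s0 r0 L1 N1 K1 L2 N2 K2 f1 f2 * (K1 f1 v / (L1 f1 v * v ^ c.nu)))))

/-- `Φ1(η; f1,f2)`. -/
def Phi1f (c : Cst) (s0 r0 : ℝ) (L1 N1 K1 L2 N2 K2 : (ℝ → ℝ) → ℝ → ℝ) (f1 f2 : ℝ → ℝ)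
    (η : ℝ) : ℝ :=
  ∫ v in s0..η, E1f c s0 r0 L1 N1 K1 L2 N2 K2 f1 f2 v / (L1 f1 v * v ^ c.nu)

/-- `H1(η; f1,f2)`. -/
def H1f (c : Cst) (s0 r0 : ℝ) (L1 N1 K1 L2 N2 K2 : (ℝ → ℝ) → ℝ → ℝ) (f1 f2 : ℝ → ℝ)
    (η : ℝ) : ℝ :=
  ∫ v in s0..η, K1 f1 v / (v ^ c.nu * E1f c s0 r0 L1 N1 K1 L2 N2 K2 f1 f2 v)

/-- `G1(η; f1,f2)`. -/
def G1f (c : Cst) (s0 r0 : ℝ) (L1 N1 K1 L2 N2 K2 : (ℝ → ℝ) → ℝ → ℝ) (f1 f2 : ℝ → ℝ)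
    (η : ℝ) : ℝ :=
  ∫ v in s0..η, E1f c s0 r0 L1 N1 K1 L2 N2 K2 f1 f2 v
    * H1f c s0 r0 L1 N1 K1 L2 N2 K2 f1 f2 v / (L1 f1 v * v ^ c.nu)

/-- `V1(f1,f2)(η)`. -/
def V1f (c : Cst) (s0 r0 : ℝ) (L1 N1 K1 L2 N2 K2 : (ℝ → ℝ) → ℝ → ℝ) (f1 f2 : ℝ → ℝ)
    (η : ℝ) : ℝ :=
  s0 ^ c.nu * c.Q * Real.exp (-s0 ^ 2)
      * (Phi1f c s0 r0 L1 N1 K1 L2 N2 K2 f1 f2 r0 - Phi1f c s0 r0 L1 N1 K1 L2 N2 K2 f1 f2 η)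
    + c.D1s / Hf c s0 r0 L1 N1 K1 L2 N2 K2 f1 f2 ^ 2
      * (G1f c s0 r0 L1 N1 K1 L2 N2 K2 f1 f2 r0 - G1f c s0 r0 L1 N1 K1 L2 N2 K2 f1 f2 η)

/-- `E2(η; f1,f2)`. -/
def E2f (c : Cst) (s0 r0 : ℝ) (L1 N1 K1 L2 N2 K2 : (ℝ → ℝ) → ℝ → ℝ) (f1 f2 : ℝ → ℝ)
    (η : ℝ) : ℝ :=
  Real.exp (-(∫ v in r0..η,
    (2 * c.a * v * (N2 f2 v / L2 f2 v)
      + c.D2 / Hf c s0 r0 L1 N1 K1 L2 N2 K2 f1 f2 * (K2 f2 v / (L2 f2 v * v ^ c.nu)))))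

/-- `Φ2(η; f1,f2)`. -/
def Phi2f (c : Cst) (s0 r0 : ℝ) (L1 N1 K1 L2 N2 K2 : (ℝ → ℝ) → ℝ → ℝ) (f1 f2 : ℝ → ℝ)
    (η : ℝ) : ℝ :=
  ∫ v in r0..η, E2f c s0 r0 L1 N1 K1 L2 N2 K2 f1 f2 v / (L2 f2 v * v ^ c.nu)

/-- `Φ2(∞; f1,f2)`. -/
def Phi2I (c : Cst) (s0 r0 : ℝ) (L1 N1 K1 L2 N2 K2 : (ℝ → ℝ) → ℝ → ℝ) (f1 f2 : ℝ → ℝ) : ℝ :=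
  ∫ v in Set.Ioi r0, E2f c s0 r0 L1 N1 K1 L2 N2 K2 f1 f2 v / (L2 f2 v * v ^ c.nu)

/-- `H2(η; f1,f2)`. -/
def H2f (c : Cst) (s0 r0 : ℝ) (L1 N1 K1 L2 N2 K2 : (ℝ → ℝ) → ℝ → ℝ) (f1 f2 : ℝ → ℝ)
    (η : ℝ) : ℝ :=
  ∫ v in r0..η, K2 f2 v / (v ^ c.nu * E2f c s0 r0 L1 N1 K1 L2 N2 K2 f1 f2 v)

/-- `G2(η; f1,f2)`. -/
def G2f (c : Cst) (s0 r0 : ℝ) (L1 N1 K1 L2 N2 K2 : (ℝ → ℝ) → ℝ → ℝ) (f1 f2 : ℝ → ℝ)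
    (η : ℝ) : ℝ :=
  ∫ v in r0..η, E2f c s0 r0 L1 N1 K1 L2 N2 K2 f1 f2 v
    * H2f c s0 r0 L1 N1 K1 L2 N2 K2 f1 f2 v / (L2 f2 v * v ^ c.nu)

/-- `G2(∞; f1,f2) = lim_{η→∞} G2(η; f1,f2)`. -/
def G2I (c : Cst) (s0 r0 : ℝ) (L1 N1 K1 L2 N2 K2 : (ℝ → ℝ) → ℝ → ℝ) (f1 f2 : ℝ → ℝ) : ℝ :=
  limUnder atTop (G2f c s0 r0 L1 N1 K1 L2 N2 K2 f1 f2)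

/-- `V2(f1,f2)(η)`. -/
def V2f (c : Cst) (s0 r0 : ℝ) (L1 N1 K1 L2 N2 K2 : (ℝ → ℝ) → ℝ → ℝ) (f1 f2 : ℝ → ℝ)
    (η : ℝ) : ℝ :=
  (c.D2s / Hf c s0 r0 L1 N1 K1 L2 N2 K2 f1 f2 ^ 2 * G2I c s0 r0 L1 N1 K1 L2 N2 K2 f1 f2 - 1)
      * (Phi2f c s0 r0 L1 N1 K1 L2 N2 K2 f1 f2 η / Phi2I c s0 r0 L1 N1 K1 L2 N2 K2 f1 f2)
    - c.D2s / Hf c s0 r0 L1 N1 K1 L2 N2 K2 f1 f2 ^ 2 * G2f c s0 r0 L1 N1 K1 L2 N2 K2 f1 f2 η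

/-! Constants appearing in the estimates. -/

def Hinf (c : Cst) (s0 r0 : ℝ) : ℝ :=
  c.K1m / (c.mu + c.nu - 1) * (s0 ^ (-(c.mu + c.nu - 1)) - r0 ^ (-(c.mu + c.nu - 1)))

def Hsup (c : Cst) (s0 r0 : ℝ) : ℝ :=
  (c.K1M * s0 ^ (-(c.mu + c.nu - 1)) + c.K2M * r0 ^ (-(c.mu + c.nu - 1))) / (c.mu + c.nu - 1)

def Htil (c : Cst) (s0 r0 : ℝ) : ℝ :=
  (c.Kt1 * s0 ^ (-(c.mu + c.nu - 1)) + c.Kt2 * r0 ^ (-(c.mu + c.nu - 1))) / (c.mu + c.nu - 1)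

/-- Limit of `Hinf` as `r0 → ∞`. -/
def HinfI (c : Cst) (s0 : ℝ) : ℝ := c.K1m / (c.mu + c.nu - 1) * s0 ^ (-(c.mu + c.nu - 1))

/-- Limit of `Hsup` as `r0 → ∞`. -/
def HsupI (c : Cst) (s0 : ℝ) : ℝ := c.K1M * s0 ^ (-(c.mu + c.nu - 1)) / (c.mu + c.nu - 1)

/-- Limit of `Htil` as `r0 → ∞`. -/
def HtilI (c : Cst) (s0 : ℝ) : ℝ := c.Kt1 * s0 ^ (-(c.mu + c.nu - 1)) / (c.mu + c.nu - 1)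

/-- `E1inf` as a function of the value `h` of `Hinf`. -/
def E1infG (c : Cst) (s0 h : ℝ) : ℝ :=
  Real.exp (-(c.a * c.N1M / (c.L1m * (c.mu - 1) * s0 ^ (2 * c.mu - 2))
    + c.D1 * c.K1M / (h * c.L1m * (2 * c.mu + c.nu - 1) * s0 ^ (2 * c.mu + c.nu - 1))))

/-- `Ẽ1` as a function of the values `h` of `Hinf` and `ht` of `Htil`. -/
def E1tilG (c : Cst) (s0 h ht : ℝ) : ℝ :=
  2 * c.a * (c.Nt1 / (c.L1m * (c.mu - 2) * s0 ^ (c.mu - 2))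
      + c.N1M * c.Lt1 / (c.L1m ^ 2 * (3 * c.mu - 2) * s0 ^ (3 * c.mu - 2)))
    + c.D1 * (c.Kt1 / (h * c.L1m * (2 * c.mu + c.nu - 1) * s0 ^ (2 * c.mu + c.nu - 1))
      + c.K1M / (h * c.L1m)
        * (ht / (h * (2 * c.mu + c.nu - 1) * s0 ^ (2 * c.mu + c.nu - 1))
          + c.Lt1 / (c.L1m * (3 * c.mu + c.nu - 1) * s0 ^ (3 * c.mu + c.nu - 1))))

def Phi1tilG (c : Cst) (s0 h ht : ℝ) : ℝ :=
  E1tilG c s0 h ht / (c.L1m * (c.mu + c.nu - 1) * s0 ^ (c.mu + c.nu - 1))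
    + c.Lt1 / (c.L1m ^ 2 * (2 * c.mu + c.nu - 1) * s0 ^ (2 * c.mu + c.nu - 1))

def H1supG (c : Cst) (s0 h : ℝ) : ℝ :=
  c.K1M / (E1infG c s0 h * (c.mu + c.nu - 1) * s0 ^ (c.mu + c.nu - 1))

def H1tilG (c : Cst) (s0 h ht : ℝ) : ℝ :=
  (c.Kt1 + c.K1M * E1tilG c s0 h ht / E1infG c s0 h)
    / (E1infG c s0 h * (c.mu + c.nu - 1) * s0 ^ (c.mu + c.nu - 1))

def G1supG (c : Cst) (s0 h : ℝ) : ℝ :=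
  H1supG c s0 h / (c.L1m * (c.mu + c.nu - 1) * s0 ^ (c.mu + c.nu - 1))

def G1tilG (c : Cst) (s0 h ht : ℝ) : ℝ :=
  H1supG c s0 h * Phi1tilG c s0 h ht
    + H1tilG c s0 h ht / (c.L1m * (c.mu + c.nu - 1) * s0 ^ (c.mu + c.nu - 1))

/-- `ε1` as a function of the values `h` of `Hinf`, `hs` of `Hsup`, `ht` of `Htil`. -/
def eps1G (c : Cst) (s0 h hs ht : ℝ) : ℝ :=
  2 * s0 ^ c.nu * c.Q * Real.exp (-s0 ^ 2) * Phi1tilG c s0 h ht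
    + 2 * c.D1s * (2 * G1supG c s0 h * hs * ht / h ^ 4 + G1tilG c s0 h ht / h ^ 2)

def E1inf (c : Cst) (s0 r0 : ℝ) : ℝ := E1infG c s0 (Hinf c s0 r0)
def E1til (c : Cst) (s0 r0 : ℝ) : ℝ := E1tilG c s0 (Hinf c s0 r0) (Htil c s0 r0)
def Phi1til (c : Cst) (s0 r0 : ℝ) : ℝ := Phi1tilG c s0 (Hinf c s0 r0) (Htil c s0 r0)
def H1sup (c : Cst) (s0 r0 : ℝ) : ℝ := H1supG c s0 (Hinf c s0 r0)
def H1til (c : Cst) (s0 r0 : ℝ) : ℝ := H1tilG c s0 (Hinf c s0 r0) (Htil c s0 r0)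
def G1sup (c : Cst) (s0 r0 : ℝ) : ℝ := G1supG c s0 (Hinf c s0 r0)
def G1til (c : Cst) (s0 r0 : ℝ) : ℝ := G1tilG c s0 (Hinf c s0 r0) (Htil c s0 r0)
def eps1 (c : Cst) (s0 r0 : ℝ) : ℝ := eps1G c s0 (Hinf c s0 r0) (Hsup c s0 r0) (Htil c s0 r0)

/-- `j1(s0) = lim_{r0→∞} ε1(r0,s0)`: the same expression with `Hinf, Hsup, Htil`
replaced by their limits as `r0 → ∞`. -/
def j1 (c : Cst) (s0 : ℝ) : ℝ := eps1G c s0 (HinfI c s0) (HsupI c s0) (HtilI c s0)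

def E2inf (c : Cst) (s0 r0 : ℝ) : ℝ :=
  Real.exp (-(c.a * c.N2M / (c.L2m * (c.mu - 1) * r0 ^ (2 * c.mu - 2))
    + c.D2 * c.K2M / (Hinf c s0 r0 * c.L2m * (2 * c.mu + c.nu - 1) * r0 ^ (2 * c.mu + c.nu - 1))))

def E2til (c : Cst) (s0 r0 : ℝ) : ℝ :=
  2 * c.a * (c.Nt2 / (c.L2m * (c.mu - 2) * r0 ^ (c.mu - 2))
      + c.N2M * c.Lt2 / (c.L2m ^ 2 * (3 * c.mu - 2) * r0 ^ (3 * c.mu - 2)))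
    + c.D2 * (c.Kt2 / (Hinf c s0 r0 * c.L2m * (2 * c.mu + c.nu - 1) * r0 ^ (2 * c.mu + c.nu - 1))
      + c.K2M / (Hinf c s0 r0 * c.L2m)
        * (Htil c s0 r0 / (Hinf c s0 r0 * (2 * c.mu + c.nu - 1) * r0 ^ (2 * c.mu + c.nu - 1))
          + c.Lt2 / (c.L2m * (3 * c.mu + c.nu - 1) * r0 ^ (3 * c.mu + c.nu - 1))))

def Phi2til (c : Cst) (s0 r0 : ℝ) : ℝ :=
  E2til c s0 r0 / (c.L2m * (c.mu + c.nu - 1) * r0 ^ (c.mu + c.nu - 1))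
    + c.Lt2 / (c.L2m ^ 2 * (2 * c.mu + c.nu - 1) * r0 ^ (2 * c.mu + c.nu - 1))

/-- `Φ2inf(∞)(r0,s0)`. -/
def Phi2infC (c : Cst) (s0 r0 : ℝ) : ℝ :=
  E2inf c s0 r0 / (c.L2M * (c.mu + c.nu - 1) * r0 ^ (c.mu + c.nu - 1))

/-- `Φ2sup(r0)`. -/
def Phi2supC (c : Cst) (r0 : ℝ) : ℝ := 1 / (c.L2m * (c.mu + c.nu - 1) * r0 ^ (c.mu + c.nu - 1))

def H2sup (c : Cst) (s0 r0 : ℝ) : ℝ :=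
  c.K2M / (E2inf c s0 r0 * (c.mu + c.nu - 1) * r0 ^ (c.mu + c.nu - 1))

def H2til (c : Cst) (s0 r0 : ℝ) : ℝ :=
  (c.Kt2 + c.K2M * E2til c s0 r0 / E2inf c s0 r0)
    / (E2inf c s0 r0 * (c.mu + c.nu - 1) * r0 ^ (c.mu + c.nu - 1))

def G2sup (c : Cst) (s0 r0 : ℝ) : ℝ :=
  H2sup c s0 r0 / (c.L2m * (c.mu + c.nu - 1) * r0 ^ (c.mu + c.nu - 1))

def G2til (c : Cst) (s0 r0 : ℝ) : ℝ :=
  H2sup c s0 r0 * Phi2til c s0 r0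
    + H2til c s0 r0 / (c.L2m * (c.mu + c.nu - 1) * r0 ^ (c.mu + c.nu - 1))

def eps21 (c : Cst) (s0 r0 : ℝ) : ℝ := 2 * Phi2til c s0 r0 / Phi2infC c s0 r0

def eps22 (c : Cst) (s0 r0 : ℝ) : ℝ :=
  G2til c s0 r0 / Hinf c s0 r0 ^ 2
    + 2 * G2sup c s0 r0 * Hsup c s0 r0 * Htil c s0 r0 / Hinf c s0 r0 ^ 4

def eps23 (c : Cst) (s0 r0 : ℝ) : ℝ :=
  Phi2supC c r0 / Phi2infC c s0 r0 * eps22 c s0 r0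
    + G2sup c s0 r0 / Hinf c s0 r0 ^ 2 * eps21 c s0 r0

def eps2 (c : Cst) (s0 r0 : ℝ) : ℝ := eps21 c s0 r0 + eps22 c s0 r0 + eps23 c s0 r0

/-! Write `E2(η) = exp (-∫_{r0}^η R)` with a nonnegative rate `R`; since `exp` is 1-Lipschitz on
`(-∞, 0]`, it suffices to bound `∫_{r0}^η |R(f) - R(g)|`. Splitting the rate difference by the
quotient rule, each piece is controlled by the Lipschitz bounds (A4), by `L ≥ L2m v^μ`, and by the
two estimates `H ≥ H_inf` and `|H(f) - H(g)| ≤ H̃ ‖(f1,f2) - (g1,g2)‖` on the normalising integral.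
This bounds `|R(f) - R(g)|` by `‖(f1,f2) - (g1,g2)‖` times a sum of four powers `v^(-p)` with
`p > 1`, and integrating these over `[r0, ∞)` produces exactly the four summands of `Ẽ2`. -/

open Set

theorem Real.abs_exp_neg_sub_exp_neg_le {A B : ℝ} (hA : 0 ≤ A) (hB : 0 ≤ B) :
    |Real.exp (-A) - Real.exp (-B)| ≤ |A - B| := by
  wlog hAB : A ≤ B generalizing A B
  · rw [abs_sub_comm, abs_sub_comm A]
    exact this hB hA (le_of_not_ge hAB)
  have hexpA : Real.exp (-A) ≤ 1 := Real.exp_le_one_iff.2 (by linarith)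
  have hsplit : Real.exp (-B) = Real.exp (-A) * Real.exp (-(B - A)) := by
    rw [← Real.exp_add]; ring_nf
  have hdecay : 1 - (B - A) ≤ Real.exp (-(B - A)) := by
    linarith [Real.add_one_le_exp (-(B - A))]
  have hle1 : Real.exp (-(B - A)) ≤ 1 := Real.exp_le_one_iff.2 (by linarith)
  rw [abs_of_nonneg (by rw [hsplit]; nlinarith [Real.exp_pos (-A)]), abs_of_nonpos (by linarith),
    hsplit]
  nlinarith [Real.exp_pos (-A)]

theorem Real.rpow_neg_add_eq_div {v : ℝ} (hv : 0 < v) (p q : ℝ) :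
    v ^ (-(p + q)) = v ^ (-p) / v ^ q := by
  rw [neg_add, Real.rpow_add hv, Real.rpow_neg hv.le q, div_eq_mul_inv]

theorem ContinuousOn.div_rpow {f : ℝ → ℝ} {s : Set ℝ} (hf : ContinuousOn f s)
    (hs : ∀ v ∈ s, 0 < v) (p : ℝ) : ContinuousOn (fun v => f v / v ^ p) s :=
  hf.div (continuousOn_id.rpow_const fun v hv => Or.inl (hs v hv).ne')
    fun v hv => (Real.rpow_pos_of_pos (hs v hv) p).ne'

theorem intervalIntegrable_rpow_of_pos {p a b : ℝ} (ha : 0 < a) (hab : a ≤ b) :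
    IntervalIntegrable (fun v : ℝ => v ^ p) volume a b :=
  intervalIntegral.intervalIntegrable_rpow (Or.inr (notMem_uIcc_of_lt ha (ha.trans_le hab)))

theorem integral_rpow_neg_eq {p a b : ℝ} (hp : 1 < p) (ha : 0 < a) (hab : a ≤ b) :
    ∫ v in a..b, v ^ (-p) = (a ^ (-(p - 1)) - b ^ (-(p - 1))) / (p - 1) := by
  rw [integral_rpow (Or.inr ⟨by linarith, notMem_uIcc_of_lt ha (ha.trans_le hab)⟩),
    show -p + 1 = -(p - 1) by ring, div_eq_div_iff (by linarith) (by linarith)]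
  ring

theorem integral_const_mul_rpow_neg_le {C p a b : ℝ} (hC : 0 ≤ C) (hp : 1 < p) (ha : 0 < a)
    (hab : a ≤ b) : ∫ v in a..b, C * v ^ (-p) ≤ C * (a ^ (-(p - 1)) / (p - 1)) := by
  rw [intervalIntegral.integral_const_mul, integral_rpow_neg_eq hp ha hab]
  exact mul_le_mul_of_nonneg_left (div_le_div_of_nonneg_right
    (sub_le_self _ (Real.rpow_nonneg (ha.le.trans hab) _)) (by linarith)) hC

theorem integral_Ioi_rpow_neg {p a : ℝ} (hp : 1 < p) (ha : 0 < a) :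
    ∫ v in Ioi a, v ^ (-p) = a ^ (-(p - 1)) / (p - 1) := by
  rw [integral_Ioi_rpow_of_lt (by linarith) ha, show -p + 1 = -(p - 1) by ring, neg_div,
    ← div_neg, neg_neg]

theorem abs_intervalIntegral_sub_le_of_rpow {f g : ℝ → ℝ} {a b C p : ℝ} (hp : 1 < p)
    (ha : 0 < a) (hab : a ≤ b) (hC : 0 ≤ C) (hf : IntervalIntegrable f volume a b)
    (hg : IntervalIntegrable g volume a b) (hfg : ∀ v ∈ Icc a b, |f v - g v| ≤ C * v ^ (-p)) :
    |(∫ v in a..b, f v) - ∫ v in a..b, g v| ≤ C * (a ^ (-(p - 1)) / (p - 1)) := by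
  rw [← intervalIntegral.integral_sub hf hg, ← Real.norm_eq_abs]
  exact (intervalIntegral.norm_integral_le_of_norm_le hab
    (ae_of_all _ fun v hv => hfg v (Ioc_subset_Icc_self hv))
    ((intervalIntegrable_rpow_of_pos ha hab).const_mul C)).trans
    (integral_const_mul_rpow_neg_le hC hp ha hab)

theorem abs_integral_Ioi_sub_le_of_rpow {f g : ℝ → ℝ} {a C p : ℝ} (hp : 1 < p) (ha : 0 < a)
    (hf : IntegrableOn f (Ioi a)) (hg : IntegrableOn g (Ioi a))
    (hfg : ∀ v ∈ Ioi a, |f v - g v| ≤ C * v ^ (-p)) :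
    |(∫ v in Ioi a, f v) - ∫ v in Ioi a, g v| ≤ C * (a ^ (-(p - 1)) / (p - 1)) := by
  rw [← integral_sub hf hg, ← Real.norm_eq_abs, ← integral_Ioi_rpow_neg hp ha,
    ← integral_const_mul]
  exact norm_integral_le_of_norm_le ((integrableOn_Ioi_rpow_of_lt (by linarith) ha).const_mul C)
    ((ae_restrict_iff' measurableSet_Ioi).2 (ae_of_all _ hfg))

theorem abs_div_sub_div_le {n n' l l' m N : ℝ} (hm : 0 < m) (hl : m ≤ l) (hl' : m ≤ l')
    (hN : |n'| ≤ N) : |n / l - n' / l'| ≤ |n - n'| / m + N * |l - l'| / m ^ 2 := by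
  have hl0 : 0 < l := hm.trans_le hl
  have hl0' : 0 < l' := hm.trans_le hl'
  have hsplit : n / l - n' / l' = (n - n') / l + n' * (l' - l) / (l * l') := by
    field_simp; ring
  rw [hsplit]
  refine (abs_add_le _ _).trans (add_le_add ?_ ?_)
  · rw [abs_div, abs_of_pos hl0]
    exact div_le_div_of_nonneg_left (abs_nonneg _) hm hl
  · rw [abs_div, abs_mul, abs_of_pos (mul_pos hl0 hl0'), abs_sub_comm, sq]
    exact div_le_div₀ (mul_nonneg ((abs_nonneg _).trans hN) (abs_nonneg _))
      (mul_le_mul_of_nonneg_right hN (abs_nonneg _)) (mul_pos hm hm)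
      (mul_le_mul hl hl' hm.le hl0.le)

theorem abs_div_div_sub_div_div_le {k k' l l' h h' m M K : ℝ} (hm : 0 < m) (hl : m ≤ l)
    (hl' : m ≤ l') (hM : 0 < M) (hh : M ≤ h) (hh' : M ≤ h') (hK : |k'| ≤ K) :
    |k / l / h - k' / l' / h'|
      ≤ (|k - k'| / m + K * |l - l'| / m ^ 2) / M + K / m * |h - h'| / M ^ 2 := by
  have hK' : |k' / l'| ≤ K / m := by
    rw [abs_div, abs_of_pos (hm.trans_le hl')]
    exact div_le_div₀ ((abs_nonneg _).trans hK) hK hm hl'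
  refine (abs_div_sub_div_le hM hh hh' hK').trans (add_le_add_left ?_ _)
  exact div_le_div_of_nonneg_right (abs_div_sub_div_le hm hl hl' hK) hM.le

theorem supOn_nonneg (S : Set ℝ) (f : ℝ → ℝ) : 0 ≤ supOn S f :=
  Real.iSup_nonneg fun _ => abs_nonneg _

theorem supOn_Icc_le_pairNorm (s0 r0 : ℝ) (f1 f2 g1 g2 : ℝ → ℝ) :
    supOn (Icc s0 r0) (f1 - g1) ≤ pairNorm s0 r0 f1 f2 g1 g2 :=
  le_max_left _ _

theorem supOn_Ici_le_pairNorm (s0 r0 : ℝ) (f1 f2 g1 g2 : ℝ → ℝ) :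
    supOn (Ici r0) (f2 - g2) ≤ pairNorm s0 r0 f1 f2 g1 g2 :=
  le_max_right _ _

theorem pairNorm_nonneg (s0 r0 : ℝ) (f1 f2 g1 g2 : ℝ → ℝ) : 0 ≤ pairNorm s0 r0 f1 f2 g1 g2 :=
  (supOn_nonneg _ _).trans (supOn_Icc_le_pairNorm _ _ _ _ _ _)

section NormalisingIntegral

variable {c : Cst} {s0 r0 : ℝ} {L1 N1 K1 L2 N2 K2 : (ℝ → ℝ) → ℝ → ℝ} {f1 f2 g1 g2 : ℝ → ℝ}

theorem PosC.r0_pos (hpos : PosC c s0 r0) : 0 < r0 :=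
  hpos.2.2.2.2.1.trans hpos.2.2.2.2.2.1

theorem Hinf_pos (hpos : PosC c s0 r0) : 0 < Hinf c s0 r0 := by
  obtain ⟨-, hnu, -, hmu, hs0, hs0r0, -, -, -, -, -, -, -, -, -, hK1m, -⟩ := hpos
  exact mul_pos (div_pos hK1m (by linarith)) (sub_pos.2
    (Real.rpow_lt_rpow_of_neg hs0 hs0r0 (by linarith)))

theorem Htil_nonneg (hpos : PosC c s0 r0) : 0 ≤ Htil c s0 r0 := by
  have hr0 := hpos.r0_pos
  obtain ⟨-, hnu, -, hmu, hs0, -, -, -, -, -, -, -, -, -, -, -, -, -, -, -, -, -, -, -, -,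
    hKt1, -, -, hKt2⟩ := hpos
  refine div_nonneg (add_nonneg ?_ ?_) (by linarith) <;> positivity

theorem intervalIntegrable_K1_div_rpow (hpos : PosC c s0 r0)
    (hA : Assum c s0 r0 L1 N1 K1 L2 N2 K2) (hf1 : f1 ∈ C1 s0 r0) :
    IntervalIntegrable (fun v => K1 f1 v / v ^ c.nu) volume s0 r0 := by
  obtain ⟨-, -, -, -, hs0, hs0r0, -⟩ := hpos
  exact ((hA.1 f1 hf1).2.2.div_rpow (fun v hv => hs0.trans_le hv.1) c.nu).intervalIntegrable_of_Icc
    hs0r0.le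

theorem integrableOn_K2_div_rpow (hpos : PosC c s0 r0) (hA : Assum c s0 r0 L1 N1 K1 L2 N2 K2)
    (hf2 : f2 ∈ Mset r0) : IntegrableOn (fun v => K2 f2 v / v ^ c.nu) (Ioi r0) := by
  have hr0 := hpos.r0_pos
  obtain ⟨-, hnu, -, hmu, -, -, -, -, -, -, -, -, -, -, -, -, -, -, -, -, -, hK2m, -⟩ := hpos
  obtain ⟨-, hcont, -, hbound, -⟩ := hA
  refine ((integrableOn_Ioi_rpow_of_lt (by linarith : -(c.mu + c.nu) < -1) hr0).const_mul
    c.K2M).mono' (((hcont f2 hf2).2.2.mono Ioi_subset_Ici_self).div_rpow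
      (fun v hv => hr0.trans hv) c.nu |>.aestronglyMeasurable measurableSet_Ioi) ?_
  refine (ae_restrict_iff' measurableSet_Ioi).2 (ae_of_all _ fun v hv => ?_)
  have hv0 : 0 < v := hr0.trans hv
  obtain ⟨-, -, -, -, hKl, hKu⟩ := hbound f2 hf2 v (Ioi_subset_Ici_self hv)
  have hK0 : 0 ≤ K2 f2 v := (mul_nonneg hK2m.le (Real.rpow_nonneg hv0.le _)).trans hKl
  rw [Real.norm_eq_abs, abs_of_nonneg (div_nonneg hK0 (Real.rpow_nonneg hv0.le _)),
    Real.rpow_neg_add_eq_div hv0, ← mul_div_assoc]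
  exact div_le_div_of_nonneg_right hKu (Real.rpow_nonneg hv0.le _)

theorem Hinf_le_Hf (hpos : PosC c s0 r0) (hA : Assum c s0 r0 L1 N1 K1 L2 N2 K2)
    (hf1 : f1 ∈ C1 s0 r0) (hf2 : f2 ∈ Mset r0) :
    Hinf c s0 r0 ≤ Hf c s0 r0 L1 N1 K1 L2 N2 K2 f1 f2 := by
  have hr0 := hpos.r0_pos
  have hint1 := intervalIntegrable_K1_div_rpow hpos hA hf1
  obtain ⟨-, hnu, -, hmu, hs0, hs0r0, -, -, -, -, -, -, -, -, -, -, -, -, -, -, -, hK2m, -⟩ := hpos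
  obtain ⟨-, -, hbound1, hbound2, -⟩ := hA
  have hpos1 : ∀ v ∈ Icc s0 r0, 0 < v := fun v hv => hs0.trans_le hv.1
  have hI1 : Hinf c s0 r0 ≤ ∫ v in s0..r0, K1 f1 v / v ^ c.nu := calc
    Hinf c s0 r0 = ∫ v in s0..r0, c.K1m * v ^ (-(c.mu + c.nu)) := by
      rw [intervalIntegral.integral_const_mul,
        integral_rpow_neg_eq (by linarith) hs0 hs0r0.le, Hinf]
      ring
    _ ≤ ∫ v in s0..r0, K1 f1 v / v ^ c.nu := by
      refine intervalIntegral.integral_mono_on hs0r0.le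
        ((intervalIntegrable_rpow_of_pos hs0 hs0r0.le).const_mul _) hint1 fun v hv => ?_
      rw [Real.rpow_neg_add_eq_div (hpos1 v hv), ← mul_div_assoc]
      exact div_le_div_of_nonneg_right (hbound1 f1 hf1 v hv).2.2.2.2.1
        (Real.rpow_nonneg (hpos1 v hv).le _)
  have hI2 : 0 ≤ ∫ v in Ioi r0, K2 f2 v / v ^ c.nu := by
    refine setIntegral_nonneg measurableSet_Ioi fun v hv => ?_
    have hv0 : 0 < v := hr0.trans hv
    exact div_nonneg ((mul_nonneg hK2m.le (Real.rpow_nonneg hv0.le _)).trans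
      (hbound2 f2 hf2 v (Ioi_subset_Ici_self hv)).2.2.2.2.1) (Real.rpow_nonneg hv0.le _)
  exact hI1.trans (le_add_of_nonneg_right hI2)

theorem abs_Hf_sub_Hf_le (hpos : PosC c s0 r0) (hA : Assum c s0 r0 L1 N1 K1 L2 N2 K2)
    (hf1 : f1 ∈ C1 s0 r0) (hf2 : f2 ∈ Mset r0) (hg1 : g1 ∈ C1 s0 r0) (hg2 : g2 ∈ Mset r0) :
    |Hf c s0 r0 L1 N1 K1 L2 N2 K2 f1 f2 - Hf c s0 r0 L1 N1 K1 L2 N2 K2 g1 g2|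
      ≤ Htil c s0 r0 * pairNorm s0 r0 f1 f2 g1 g2 := by
  have hr0 := hpos.r0_pos
  have hint1f := intervalIntegrable_K1_div_rpow hpos hA hf1
  have hint1g := intervalIntegrable_K1_div_rpow hpos hA hg1
  have hint2f := integrableOn_K2_div_rpow hpos hA hf2
  have hint2g := integrableOn_K2_div_rpow hpos hA hg2
  obtain ⟨-, hnu, -, hmu, hs0, hs0r0, -, -, -, -, -, -, -, -, -, -, -, -, -, -, -, -, -, -, -,
    hKt1, -, -, hKt2⟩ := hpos
  obtain ⟨-, -, -, -, hlip1, hlip2⟩ := hA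
  set δ := pairNorm s0 r0 f1 f2 g1 g2
  have hδ : 0 ≤ δ := pairNorm_nonneg _ _ _ _ _ _
  have hdiv : ∀ {v C k k' : ℝ}, 0 < v → |k - k'| ≤ C * v ^ (-c.mu) * δ →
      |k / v ^ c.nu - k' / v ^ c.nu| ≤ C * δ * v ^ (-(c.mu + c.nu)) := by
    intro v C k k' hv hk
    rw [div_sub_div_same, abs_div, abs_of_pos (Real.rpow_pos_of_pos hv _),
      Real.rpow_neg_add_eq_div hv, mul_div_assoc', mul_right_comm]
    exact div_le_div_of_nonneg_right hk (Real.rpow_nonneg hv.le _)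
  have hK1part := abs_intervalIntegral_sub_le_of_rpow (by linarith) hs0 hs0r0.le
    (mul_nonneg hKt1.le hδ) hint1f hint1g
    fun v hv => hdiv (hs0.trans_le hv.1) ((hlip1 f1 hf1 g1 hg1 v hv).2.2.trans
      (mul_le_mul_of_nonneg_left (supOn_Icc_le_pairNorm _ _ _ _ _ _)
        (mul_nonneg hKt1.le (Real.rpow_nonneg (hs0.trans_le hv.1).le _))))
  have hK2part := abs_integral_Ioi_sub_le_of_rpow (by linarith) hr0 hint2f hint2g
    fun v hv => hdiv (hr0.trans hv)
      ((hlip2 f2 hf2 g2 hg2 v (Ioi_subset_Ici_self hv)).2.2.trans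
        (mul_le_mul_of_nonneg_left (supOn_Ici_le_pairNorm _ _ _ _ _ _)
          (mul_nonneg hKt2.le (Real.rpow_nonneg (hr0.trans hv).le _))))
  rw [← Real.dist_eq, Hf, Hf]
  refine (dist_add_add_le _ _ _ _).trans ((add_le_add hK1part hK2part).trans_eq ?_)
  unfold Htil
  ring

end NormalisingIntegral

def E2rate (c : Cst) (s0 r0 : ℝ) (L1 N1 K1 L2 N2 K2 : (ℝ → ℝ) → ℝ → ℝ) (f1 f2 : ℝ → ℝ)
    (v : ℝ) : ℝ :=
  2 * c.a * v * (N2 f2 v / L2 f2 v)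
    + c.D2 / Hf c s0 r0 L1 N1 K1 L2 N2 K2 f1 f2 * (K2 f2 v / (L2 f2 v * v ^ c.nu))

def E2rateLip (c : Cst) (s0 r0 v : ℝ) : ℝ :=
  2 * c.a * c.Nt2 / c.L2m * v ^ (-(c.mu - 1))
    + 2 * c.a * c.N2M * c.Lt2 / c.L2m ^ 2 * v ^ (-(3 * c.mu - 1))
    + c.D2 * (c.Kt2 / (Hinf c s0 r0 * c.L2m) + c.K2M * Htil c s0 r0 / (Hinf c s0 r0 ^ 2 * c.L2m))
      * v ^ (-(2 * c.mu + c.nu))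
    + c.D2 * c.K2M * c.Lt2 / (Hinf c s0 r0 * c.L2m ^ 2) * v ^ (-(3 * c.mu + c.nu))

theorem E2rate_sub_E2rate (c : Cst) (s0 r0 : ℝ) (L1 N1 K1 L2 N2 K2 : (ℝ → ℝ) → ℝ → ℝ)
    (f1 f2 g1 g2 : ℝ → ℝ) (v : ℝ) :
    E2rate c s0 r0 L1 N1 K1 L2 N2 K2 f1 f2 v - E2rate c s0 r0 L1 N1 K1 L2 N2 K2 g1 g2 v
      = 2 * c.a * v * (N2 f2 v / L2 f2 v - N2 g2 v / L2 g2 v)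
        + c.D2 / v ^ c.nu * (K2 f2 v / L2 f2 v / Hf c s0 r0 L1 N1 K1 L2 N2 K2 f1 f2
          - K2 g2 v / L2 g2 v / Hf c s0 r0 L1 N1 K1 L2 N2 K2 g1 g2) := by
  unfold E2rate
  ring

theorem E2rateLip_mul_eq (c : Cst) (s0 r0 : ℝ) {v : ℝ} (hv : 0 < v) (δ : ℝ) :
    E2rateLip c s0 r0 v * δ
      = 2 * c.a * v * (c.Nt2 * δ / (c.L2m * v ^ c.mu)
          + c.N2M * v ^ (-c.mu) * (c.Lt2 * δ) / (c.L2m * v ^ c.mu) ^ 2)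
        + c.D2 / v ^ c.nu * ((c.Kt2 * v ^ (-c.mu) * δ / (c.L2m * v ^ c.mu)
            + c.K2M * v ^ (-c.mu) * (c.Lt2 * δ) / (c.L2m * v ^ c.mu) ^ 2) / Hinf c s0 r0
          + c.K2M * v ^ (-c.mu) / (c.L2m * v ^ c.mu) * (Htil c s0 r0 * δ) / Hinf c s0 r0 ^ 2) := by
  -- express every power of `v` through `v ^ c.mu` and `v ^ c.nu`
  rw [E2rateLip, show -(c.mu - 1) = 1 - c.mu by ring,
    show -(3 * c.mu - 1) = 1 - (c.mu + c.mu + c.mu) by ring,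
    show -(2 * c.mu + c.nu) = 0 - (c.mu + c.mu + c.nu) by ring,
    show -(3 * c.mu + c.nu) = 0 - (c.mu + c.mu + c.mu + c.nu) by ring,
    show -c.mu = 0 - c.mu by ring]
  simp only [Real.rpow_sub hv, Real.rpow_add hv, Real.rpow_zero, Real.rpow_one]
  ring

section Rate

variable {c : Cst} {s0 r0 : ℝ} {L1 N1 K1 L2 N2 K2 : (ℝ → ℝ) → ℝ → ℝ} {f1 f2 g1 g2 : ℝ → ℝ}

theorem E2f_eq_exp_integral_E2rate (η : ℝ) :
    E2f c s0 r0 L1 N1 K1 L2 N2 K2 f1 f2 η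
      = Real.exp (-∫ v in r0..η, E2rate c s0 r0 L1 N1 K1 L2 N2 K2 f1 f2 v) :=
  rfl

theorem continuousOn_E2rate (hpos : PosC c s0 r0) (hA : Assum c s0 r0 L1 N1 K1 L2 N2 K2)
    (hf2 : f2 ∈ Mset r0) : ContinuousOn (E2rate c s0 r0 L1 N1 K1 L2 N2 K2 f1 f2) (Ici r0) := by
  have hv0 : ∀ v ∈ Ici r0, 0 < v := fun v hv => hpos.r0_pos.trans_le hv
  obtain ⟨-, -, -, -, -, -, -, -, -, -, -, -, -, -, -, -, -, hL2m, -⟩ := hpos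
  obtain ⟨-, hcont, -, hbound, -⟩ := hA
  obtain ⟨hLc, hNc, hKc⟩ := hcont f2 hf2
  have hL0 : ∀ v ∈ Ici r0, 0 < L2 f2 v := fun v hv =>
    (mul_pos hL2m (Real.rpow_pos_of_pos (hv0 v hv) _)).trans_le (hbound f2 hf2 v hv).1
  refine ((continuousOn_const.mul continuousOn_id).mul (hNc.div hLc fun v hv => (hL0 v hv).ne')).add
    (continuousOn_const.mul ?_)
  exact hKc.div (hLc.mul (continuousOn_id.rpow_const fun v hv => Or.inl (hv0 v hv).ne'))
    fun v hv => (mul_pos (hL0 v hv) (Real.rpow_pos_of_pos (hv0 v hv) _)).ne'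

theorem E2rate_nonneg (hpos : PosC c s0 r0) (hA : Assum c s0 r0 L1 N1 K1 L2 N2 K2)
    (hf1 : f1 ∈ C1 s0 r0) (hf2 : f2 ∈ Mset r0) {v : ℝ} (hv : r0 ≤ v) :
    0 ≤ E2rate c s0 r0 L1 N1 K1 L2 N2 K2 f1 f2 v := by
  have hH := (Hinf_pos hpos).trans_le (Hinf_le_Hf hpos hA hf1 hf2)
  have hv0 : 0 < v := hpos.r0_pos.trans_le hv
  obtain ⟨ha, -, -, -, -, -, -, hD2, -, -, -, -, -, -, -, -, -, hL2m, -, hN2m, -, hK2m, -⟩ := hpos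
  obtain ⟨hL, -, hN, -, hK, -⟩ := hA.2.2.2.1 f2 hf2 v hv
  have hXi : 0 < v ^ (-c.mu) := Real.rpow_pos_of_pos hv0 _
  have hL0 : 0 < L2 f2 v := (mul_pos hL2m (Real.rpow_pos_of_pos hv0 _)).trans_le hL
  have hN0 : 0 ≤ N2 f2 v := (mul_pos hN2m hXi).le.trans hN
  have hK0 : 0 ≤ K2 f2 v := (mul_pos hK2m hXi).le.trans hK
  unfold E2rate
  positivity

theorem abs_E2rate_sub_le (hpos : PosC c s0 r0) (hA : Assum c s0 r0 L1 N1 K1 L2 N2 K2)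
    (hf1 : f1 ∈ C1 s0 r0) (hf2 : f2 ∈ Mset r0) (hg1 : g1 ∈ C1 s0 r0) (hg2 : g2 ∈ Mset r0)
    {v : ℝ} (hv : r0 ≤ v) :
    |E2rate c s0 r0 L1 N1 K1 L2 N2 K2 f1 f2 v - E2rate c s0 r0 L1 N1 K1 L2 N2 K2 g1 g2 v|
      ≤ E2rateLip c s0 r0 v * pairNorm s0 r0 f1 f2 g1 g2 := by
  have hHi := Hinf_pos hpos
  have hHf := Hinf_le_Hf hpos hA hf1 hf2
  have hHg := Hinf_le_Hf hpos hA hg1 hg2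
  have hHlip := abs_Hf_sub_Hf_le hpos hA hf1 hf2 hg1 hg2
  have hv0 : 0 < v := hpos.r0_pos.trans_le hv
  obtain ⟨ha, -, -, -, -, -, -, hD2, -, -, -, -, -, -, -, -, -, hL2m, -, hN2m, hN2M, hK2m, hK2M,
    -, -, -, hLt2, hNt2, hKt2⟩ := hpos
  obtain ⟨-, -, -, hbound, -, hlip⟩ := hA
  obtain ⟨hLf, -⟩ := hbound f2 hf2 v hv
  obtain ⟨hLg, -, hNg, hNg', hKg, hKg'⟩ := hbound g2 hg2 v hv
  obtain ⟨hLl, hNl, hKl⟩ := hlip f2 hf2 g2 hg2 v hv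
  have hXi : 0 < v ^ (-c.mu) := Real.rpow_pos_of_pos hv0 _
  have hm : 0 < c.L2m * v ^ c.mu := mul_pos hL2m (Real.rpow_pos_of_pos hv0 _)
  set δ := pairNorm s0 r0 f1 f2 g1 g2
  have hδ2 : supOn (Ici r0) (f2 - g2) ≤ δ := supOn_Ici_le_pairNorm _ _ _ _ _ _
  have hNg0 : |N2 g2 v| ≤ c.N2M * v ^ (-c.mu) := by
    rwa [abs_of_nonneg ((mul_pos hN2m hXi).le.trans hNg)]
  have hKg0 : |K2 g2 v| ≤ c.K2M * v ^ (-c.mu) := by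
    rwa [abs_of_nonneg ((mul_pos hK2m hXi).le.trans hKg)]
  have hNl' : |N2 f2 v - N2 g2 v| ≤ c.Nt2 * δ := hNl.trans (by gcongr)
  have hLl' : |L2 f2 v - L2 g2 v| ≤ c.Lt2 * δ := hLl.trans (by gcongr)
  have hKl' : |K2 f2 v - K2 g2 v| ≤ c.Kt2 * v ^ (-c.mu) * δ := hKl.trans (by gcongr)
  rw [E2rate_sub_E2rate, E2rateLip_mul_eq c s0 r0 hv0]
  refine (abs_add_le _ _).trans (add_le_add ?_ ?_) <;> rw [abs_mul, abs_of_pos (by positivity)]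
  · exact mul_le_mul_of_nonneg_left
      ((abs_div_sub_div_le hm hLf hLg hNg0).trans (by gcongr)) (by positivity)
  · exact mul_le_mul_of_nonneg_left
      ((abs_div_div_sub_div_div_le hm hLf hLg hHi hHf hHg hKg0).trans (by gcongr)) (by positivity)

theorem intervalIntegrable_E2rateLip (hr0 : 0 < r0) {η : ℝ} (hη : r0 ≤ η) :
    IntervalIntegrable (E2rateLip c s0 r0) volume r0 η := by
  unfold E2rateLip
  repeat' refine IntervalIntegrable.add ?_ ?_
  all_goals exact (intervalIntegrable_rpow_of_pos hr0 hη).const_mul _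

theorem integral_E2rateLip_le (hpos : PosC c s0 r0) {η : ℝ} (hη : r0 ≤ η) :
    ∫ v in r0..η, E2rateLip c s0 r0 v ≤ E2til c s0 r0 := by
  have hHi := Hinf_pos hpos
  have hHt := Htil_nonneg hpos
  have hr0 := hpos.r0_pos
  obtain ⟨ha, hnu, -, hmu, -, -, -, hD2, -, -, -, -, -, -, -, -, -, hL2m, -, -, hN2M, -,
    hK2M, -, -, -, hLt2, hNt2, hKt2⟩ := hpos
  unfold E2rateLip
  rw [intervalIntegral.integral_add, intervalIntegral.integral_add, intervalIntegral.integral_add]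
  · refine (add_le_add (add_le_add (add_le_add
      (integral_const_mul_rpow_neg_le (by positivity) (by linarith) hr0 hη)
      (integral_const_mul_rpow_neg_le (by positivity) (by linarith) hr0 hη))
      (integral_const_mul_rpow_neg_le (by positivity) (by linarith) hr0 hη))
      (integral_const_mul_rpow_neg_le (by positivity) (by linarith) hr0 hη)).trans_eq ?_
    have hμ : c.mu - 2 ≠ 0 := by linarith
    have h3μ : 3 * c.mu - 2 ≠ 0 := by linarith
    have h2μν : 2 * c.mu + c.nu - 1 ≠ 0 := by linarith
    have h3μν : 3 * c.mu + c.nu - 1 ≠ 0 := by linarith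
    rw [E2til, show c.mu - 1 - 1 = c.mu - 2 by ring, show 3 * c.mu - 1 - 1 = 3 * c.mu - 2 by ring]
    simp only [Real.rpow_neg hr0.le]
    field_simp
    ring
  all_goals repeat' refine IntervalIntegrable.add ?_ ?_
  all_goals exact (intervalIntegrable_rpow_of_pos hr0 hη).const_mul _

end Rate

theorem stmt11 (c : Cst) (s0 r0 : ℝ) (L1 N1 K1 L2 N2 K2 : (ℝ → ℝ) → ℝ → ℝ)
    (hpos : PosC c s0 r0) (hA : Assum c s0 r0 L1 N1 K1 L2 N2 K2)
    (f1 f2 : ℝ → ℝ) (hf1 : f1 ∈ C1 s0 r0) (hf2 : f2 ∈ Mset r0)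
    (g1 g2 : ℝ → ℝ) (hg1 : g1 ∈ C1 s0 r0) (hg2 : g2 ∈ Mset r0) :
    ∀ η ∈ Set.Ici r0,
      |E2f c s0 r0 L1 N1 K1 L2 N2 K2 f1 f2 η - E2f c s0 r0 L1 N1 K1 L2 N2 K2 g1 g2 η| ≤ E2til c s0 r0 * pairNorm s0 r0 f1 f2 g1 g2 := by
  intro η (hη : r0 ≤ η)
  have hr0 := hpos.r0_pos
  have hint : ∀ {p1 p2}, p2 ∈ Mset r0 →
      IntervalIntegrable (E2rate c s0 r0 L1 N1 K1 L2 N2 K2 p1 p2) volume r0 η := fun hp2 =>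
    ((continuousOn_E2rate hpos hA hp2).mono Icc_subset_Ici_self).intervalIntegrable_of_Icc hη
  have hnonneg : ∀ {p1 p2}, p1 ∈ C1 s0 r0 → p2 ∈ Mset r0 →
      0 ≤ ∫ v in r0..η, E2rate c s0 r0 L1 N1 K1 L2 N2 K2 p1 p2 v := fun hp1 hp2 =>
    intervalIntegral.integral_nonneg hη fun v hv => E2rate_nonneg hpos hA hp1 hp2 hv.1
  rw [E2f_eq_exp_integral_E2rate, E2f_eq_exp_integral_E2rate]
  calc _ ≤ |(∫ v in r0..η, E2rate c s0 r0 L1 N1 K1 L2 N2 K2 f1 f2 v)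
        - ∫ v in r0..η, E2rate c s0 r0 L1 N1 K1 L2 N2 K2 g1 g2 v| :=
        Real.abs_exp_neg_sub_exp_neg_le (hnonneg hf1 hf2) (hnonneg hg1 hg2)
    _ ≤ ∫ v in r0..η, E2rateLip c s0 r0 v * pairNorm s0 r0 f1 f2 g1 g2 := by
        rw [← intervalIntegral.integral_sub (hint hf2) (hint hg2), ← Real.norm_eq_abs]
        exact intervalIntegral.norm_integral_le_of_norm_le hη
          (ae_of_all _ fun v hv => abs_E2rate_sub_le hpos hA hf1 hf2 hg1 hg2 hv.1.le)
          ((intervalIntegrable_E2rateLip hr0 hη).mul_const _)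
    _ ≤ E2til c s0 r0 * pairNorm s0 r0 f1 f2 g1 g2 := by
        rw [intervalIntegral.integral_mul_const]
        exact mul_le_mul_of_nonneg_right (integral_E2rateLip_le hpos hη)
          (pairNorm_nonneg _ _ _ _ _ _)
end
end

section
/- Fix s0 > 0 and regard ε2 as a function of r0 ∈ (s0,∞), with ε2(r0,s0) = ε21(r0,s0) + ε22(r0,s0) + ε23(r0,s0), where ε21 = 2·Φ̃2/Φ2inf(∞), ε22 = G̃2/H_inf² + 2·G2sup·H_sup·H̃/H_inf⁴, and ε23 = (Φ2sup/Φ2inf(∞))·ε22 + (G2sup/H_inf²)·ε21 (all constituents depending on (r0,s0) as defined in the context). Then: (a) r0 ↦ ε2(r0,s0) is a decreasing function on (s0,∞), ε2(r0,s0) → +∞ as r0 → s0⁺, and ε2(r0,s0) → 0 as r0 → +∞; (b) for each s0 > 0 there exists r2(s0) > s0 such that ε2(r2(s0),s0) = 1 and ε2(r0,s0) < 1 for all r0 > r2(s0). -/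
open MeasureTheory Filter Topology

noncomputable section

/-!
Every constituent of `ε2(·, s0)` is assembled, by sums, products and quotients with positive
constants, from the decreasing powers `r0 ^ (-p)` and from `H_inf` and `E2inf`, which increase in
`r0`. Hence `ε2` decreases, and strictly so because `ε21` carries a positive multiple of
`r0 ^ (-μ) / E2inf`. As `r0 → s0⁺`, `H_inf → 0⁺` forces `E2inf → 0`, so that multiple blows up;
as `r0 → ∞`, `H_inf` has a positive limit, `E2inf → 1`, and every remaining factor carries a
negative power of `r0`, so `ε2 → 0`. The intermediate value theorem then produces `r2(s0)`.
-/

open Set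

theorem tendsto_const_div_mul_rpow_atTop (C : ℝ) {k p : ℝ} (hk : 0 < k) (hp : 0 < p) :
    Tendsto (fun r : ℝ => C / (k * r ^ p)) atTop (𝓝 0) :=
  tendsto_const_nhds.div_atTop ((tendsto_rpow_atTop hp).const_mul_atTop hk)

theorem StrictAntiOn.exists_eq_forall_lt_of_tendsto {f : ℝ → ℝ} {a l y : ℝ}
    (hanti : StrictAntiOn f (Ioi a)) (hcont : ContinuousOn f (Ioi a))
    (hleft : Tendsto f (𝓝[>] a) atTop) (hright : Tendsto f atTop (𝓝 l)) (hly : l < y) :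
    ∃ r, a < r ∧ f r = y ∧ ∀ r', r < r' → f r' < y := by
  obtain ⟨A, hyA, haA⟩ := ((hleft.eventually_ge_atTop y).and self_mem_nhdsWithin).exists
  obtain ⟨B, hBy, hAB⟩ := ((hright.eventually_lt_const hly).and (eventually_ge_atTop A)).exists
  obtain ⟨r, hr, hfr⟩ := intermediate_value_Icc' hAB
    (hcont.mono fun x hx => lt_of_lt_of_le haA hx.1) ⟨hBy.le, hyA⟩
  have har : a < r := lt_of_lt_of_le haA hr.1
  exact ⟨r, har, hfr, fun r' hr' => hfr ▸ hanti har (har.trans hr') hr'⟩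

theorem E2inf_pos (c : Cst) (s0 r : ℝ) : 0 < E2inf c s0 r := Real.exp_pos _

theorem tendsto_Hinf_nhdsGT (c : Cst) {s0 : ℝ} (hs0 : 0 < s0) :
    Tendsto (Hinf c s0) (𝓝[>] s0) (𝓝 0) := by
  have hcont : ContinuousAt (Hinf c s0) s0 := by
    unfold Hinf
    fun_prop (disch := exact Or.inl hs0.ne')
  simpa [Hinf] using hcont.tendsto.mono_left nhdsWithin_le_nhds

namespace PosCst

variable {c : Cst} {s0 x : ℝ}

theorem consts_pos (hc : PosCst c) :
    0 < c.a ∧ 0 < c.D2 ∧ 0 < c.L2m ∧ 0 < c.L2M ∧ 0 < c.N2M ∧ 0 < c.K2M ∧ 0 < c.K1m ∧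
    0 < c.K1M ∧ 0 < c.Kt1 ∧ 0 < c.Kt2 ∧ 0 < c.Lt2 ∧ 0 < c.Nt2 ∧
    0 < c.mu ∧ 0 < c.mu - 1 ∧ 0 < c.mu - 2 ∧ 0 < 2 * c.mu - 2 ∧ 0 < 3 * c.mu - 2 ∧
    0 < c.mu + c.nu - 1 ∧ 0 < 2 * c.mu + c.nu - 1 ∧ 0 < 3 * c.mu + c.nu - 1 := by
  obtain ⟨ha, hnu, -, hmu, -, hD2, -, -, -, -, -, -, -, hK1m, hK1M,
    hL2m, hL2M, -, hN2M, -, hK2M, -, -, hKt1, hLt2, hNt2, hKt2⟩ := hc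
  refine ⟨ha, hD2, hL2m, hL2M, hN2M, hK2M, hK1m, hK1M, hKt1, hKt2, hLt2, hNt2,
    ?_, ?_, ?_, ?_, ?_, ?_, ?_, ?_⟩ <;> linarith

theorem Hinf_pos (hc : PosCst c) (hs0 : 0 < s0) (hx : s0 < x) : 0 < Hinf c s0 x := by
  obtain ⟨ha, hD2, hL2m, hL2M, hN2M, hK2M, hK1m, hK1M, hKt1, hKt2, hLt2, hNt2,
    hμ, hμ1, hμ2, h2μ2, h3μ2, hk1, hk2, hk3⟩ := hc.consts_pos
  have hpow := sub_pos.2 (Real.rpow_lt_rpow_of_neg hs0 hx (neg_neg_of_pos hk1))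
  unfold Hinf
  positivity

theorem monotoneOn_Hinf (hc : PosCst c) (s0 : ℝ) : MonotoneOn (Hinf c s0) (Ioi 0) := by
  intro x (hx : 0 < x) y _ hxy
  obtain ⟨ha, hD2, hL2m, hL2M, hN2M, hK2M, hK1m, hK1M, hKt1, hKt2, hLt2, hNt2,
    hμ, hμ1, hμ2, h2μ2, h3μ2, hk1, hk2, hk3⟩ := hc.consts_pos
  have hpow := Real.rpow_le_rpow_of_nonpos hx hxy (neg_nonpos.2 hk1.le)
  unfold Hinf
  gcongr

theorem Hsup_pos (hc : PosCst c) (hs0 : 0 < s0) (hx : 0 < x) : 0 < Hsup c s0 x := by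
  obtain ⟨ha, hD2, hL2m, hL2M, hN2M, hK2M, hK1m, hK1M, hKt1, hKt2, hLt2, hNt2,
    hμ, hμ1, hμ2, h2μ2, h3μ2, hk1, hk2, hk3⟩ := hc.consts_pos
  unfold Hsup
  positivity

theorem antitoneOn_Hsup (hc : PosCst c) (s0 : ℝ) : AntitoneOn (Hsup c s0) (Ioi 0) := by
  intro x (hx : 0 < x) y _ hxy
  obtain ⟨ha, hD2, hL2m, hL2M, hN2M, hK2M, hK1m, hK1M, hKt1, hKt2, hLt2, hNt2,
    hμ, hμ1, hμ2, h2μ2, h3μ2, hk1, hk2, hk3⟩ := hc.consts_pos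
  have hpow := Real.rpow_le_rpow_of_nonpos hx hxy (neg_nonpos.2 hk1.le)
  unfold Hsup
  gcongr

theorem Htil_pos (hc : PosCst c) (hs0 : 0 < s0) (hx : 0 < x) : 0 < Htil c s0 x := by
  obtain ⟨ha, hD2, hL2m, hL2M, hN2M, hK2M, hK1m, hK1M, hKt1, hKt2, hLt2, hNt2,
    hμ, hμ1, hμ2, h2μ2, h3μ2, hk1, hk2, hk3⟩ := hc.consts_pos
  unfold Htil
  positivity

theorem antitoneOn_Htil (hc : PosCst c) (s0 : ℝ) : AntitoneOn (Htil c s0) (Ioi 0) := by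
  intro x (hx : 0 < x) y _ hxy
  obtain ⟨ha, hD2, hL2m, hL2M, hN2M, hK2M, hK1m, hK1M, hKt1, hKt2, hLt2, hNt2,
    hμ, hμ1, hμ2, h2μ2, h3μ2, hk1, hk2, hk3⟩ := hc.consts_pos
  have hpow := Real.rpow_le_rpow_of_nonpos hx hxy (neg_nonpos.2 hk1.le)
  unfold Htil
  gcongr

theorem monotoneOn_E2inf (hc : PosCst c) (hs0 : 0 < s0) : MonotoneOn (E2inf c s0) (Ioi s0) := by
  intro x (hx : s0 < x) y (hy : s0 < y) hxy
  obtain ⟨ha, hD2, hL2m, hL2M, hN2M, hK2M, hK1m, hK1M, hKt1, hKt2, hLt2, hNt2,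
    hμ, hμ1, hμ2, h2μ2, h3μ2, hk1, hk2, hk3⟩ := hc.consts_pos
  have hx0 := hs0.trans hx
  have hHx := hc.Hinf_pos hs0 hx
  have hH := hc.monotoneOn_Hinf s0 hx0 (hs0.trans hy) hxy
  have hHy := hc.Hinf_pos hs0 hy
  unfold E2inf
  gcongr

theorem E2til_pos (hc : PosCst c) (hs0 : 0 < s0) (hx : s0 < x) : 0 < E2til c s0 x := by
  obtain ⟨ha, hD2, hL2m, hL2M, hN2M, hK2M, hK1m, hK1M, hKt1, hKt2, hLt2, hNt2,
    hμ, hμ1, hμ2, h2μ2, h3μ2, hk1, hk2, hk3⟩ := hc.consts_pos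
  have hx0 := hs0.trans hx
  have hH := hc.Hinf_pos hs0 hx
  have hT := hc.Htil_pos hs0 hx0
  unfold E2til
  positivity

theorem antitoneOn_E2til (hc : PosCst c) (hs0 : 0 < s0) : AntitoneOn (E2til c s0) (Ioi s0) := by
  intro x (hx : s0 < x) y (hy : s0 < y) hxy
  obtain ⟨ha, hD2, hL2m, hL2M, hN2M, hK2M, hK1m, hK1M, hKt1, hKt2, hLt2, hNt2,
    hμ, hμ1, hμ2, h2μ2, h3μ2, hk1, hk2, hk3⟩ := hc.consts_pos
  have hx0 := hs0.trans hx
  have hy0 := hs0.trans hy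
  have hHx := hc.Hinf_pos hs0 hx
  have hHy := hc.Hinf_pos hs0 hy
  have hH := hc.monotoneOn_Hinf s0 hx0 hy0 hxy
  have hTx := hc.Htil_pos hs0 hx0
  have hTy := hc.Htil_pos hs0 hy0
  have hT := hc.antitoneOn_Htil s0 hx0 hy0 hxy
  unfold E2til
  gcongr

theorem Phi2til_pos (hc : PosCst c) (hs0 : 0 < s0) (hx : s0 < x) : 0 < Phi2til c s0 x := by
  obtain ⟨ha, hD2, hL2m, hL2M, hN2M, hK2M, hK1m, hK1M, hKt1, hKt2, hLt2, hNt2,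
    hμ, hμ1, hμ2, h2μ2, h3μ2, hk1, hk2, hk3⟩ := hc.consts_pos
  have hx0 := hs0.trans hx
  have hE := hc.E2til_pos hs0 hx
  unfold Phi2til
  positivity

theorem antitoneOn_Phi2til (hc : PosCst c) (hs0 : 0 < s0) :
    AntitoneOn (Phi2til c s0) (Ioi s0) := by
  intro x (hx : s0 < x) y (hy : s0 < y) hxy
  obtain ⟨ha, hD2, hL2m, hL2M, hN2M, hK2M, hK1m, hK1M, hKt1, hKt2, hLt2, hNt2,
    hμ, hμ1, hμ2, h2μ2, h3μ2, hk1, hk2, hk3⟩ := hc.consts_pos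
  have hx0 := hs0.trans hx
  have hEx := hc.E2til_pos hs0 hx
  have hE := hc.antitoneOn_E2til hs0 hx hy hxy
  unfold Phi2til
  gcongr

theorem H2sup_pos (hc : PosCst c) (s0 : ℝ) (hx : 0 < x) : 0 < H2sup c s0 x := by
  obtain ⟨ha, hD2, hL2m, hL2M, hN2M, hK2M, hK1m, hK1M, hKt1, hKt2, hLt2, hNt2,
    hμ, hμ1, hμ2, h2μ2, h3μ2, hk1, hk2, hk3⟩ := hc.consts_pos
  have hE := E2inf_pos c s0 x
  unfold H2sup
  positivity

theorem antitoneOn_H2sup (hc : PosCst c) (hs0 : 0 < s0) : AntitoneOn (H2sup c s0) (Ioi s0) := by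
  intro x (hx : s0 < x) y (hy : s0 < y) hxy
  obtain ⟨ha, hD2, hL2m, hL2M, hN2M, hK2M, hK1m, hK1M, hKt1, hKt2, hLt2, hNt2,
    hμ, hμ1, hμ2, h2μ2, h3μ2, hk1, hk2, hk3⟩ := hc.consts_pos
  have hx0 := hs0.trans hx
  have hEx := E2inf_pos c s0 x
  have hEy := E2inf_pos c s0 y
  have hE := hc.monotoneOn_E2inf hs0 hx hy hxy
  unfold H2sup
  gcongr

theorem H2til_pos (hc : PosCst c) (hs0 : 0 < s0) (hx : s0 < x) : 0 < H2til c s0 x := by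
  obtain ⟨ha, hD2, hL2m, hL2M, hN2M, hK2M, hK1m, hK1M, hKt1, hKt2, hLt2, hNt2,
    hμ, hμ1, hμ2, h2μ2, h3μ2, hk1, hk2, hk3⟩ := hc.consts_pos
  have hx0 := hs0.trans hx
  have hE := E2inf_pos c s0 x
  have hEt := hc.E2til_pos hs0 hx
  unfold H2til
  positivity

theorem antitoneOn_H2til (hc : PosCst c) (hs0 : 0 < s0) : AntitoneOn (H2til c s0) (Ioi s0) := by
  intro x (hx : s0 < x) y (hy : s0 < y) hxy
  obtain ⟨ha, hD2, hL2m, hL2M, hN2M, hK2M, hK1m, hK1M, hKt1, hKt2, hLt2, hNt2,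
    hμ, hμ1, hμ2, h2μ2, h3μ2, hk1, hk2, hk3⟩ := hc.consts_pos
  have hx0 := hs0.trans hx
  have hEx := E2inf_pos c s0 x
  have hEy := E2inf_pos c s0 y
  have hE := hc.monotoneOn_E2inf hs0 hx hy hxy
  have hEtx := hc.E2til_pos hs0 hx
  have hEt := hc.antitoneOn_E2til hs0 hx hy hxy
  unfold H2til
  gcongr

theorem G2sup_pos (hc : PosCst c) (s0 : ℝ) (hx : 0 < x) : 0 < G2sup c s0 x := by
  obtain ⟨ha, hD2, hL2m, hL2M, hN2M, hK2M, hK1m, hK1M, hKt1, hKt2, hLt2, hNt2,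
    hμ, hμ1, hμ2, h2μ2, h3μ2, hk1, hk2, hk3⟩ := hc.consts_pos
  have hH := hc.H2sup_pos s0 hx
  unfold G2sup
  positivity

theorem antitoneOn_G2sup (hc : PosCst c) (hs0 : 0 < s0) : AntitoneOn (G2sup c s0) (Ioi s0) := by
  intro x (hx : s0 < x) y (hy : s0 < y) hxy
  obtain ⟨ha, hD2, hL2m, hL2M, hN2M, hK2M, hK1m, hK1M, hKt1, hKt2, hLt2, hNt2,
    hμ, hμ1, hμ2, h2μ2, h3μ2, hk1, hk2, hk3⟩ := hc.consts_pos
  have hx0 := hs0.trans hx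
  have hHx := hc.H2sup_pos s0 hx0
  have hH := hc.antitoneOn_H2sup hs0 hx hy hxy
  unfold G2sup
  gcongr

theorem G2til_pos (hc : PosCst c) (hs0 : 0 < s0) (hx : s0 < x) : 0 < G2til c s0 x := by
  obtain ⟨ha, hD2, hL2m, hL2M, hN2M, hK2M, hK1m, hK1M, hKt1, hKt2, hLt2, hNt2,
    hμ, hμ1, hμ2, h2μ2, h3μ2, hk1, hk2, hk3⟩ := hc.consts_pos
  have hx0 := hs0.trans hx
  have h1 := hc.H2sup_pos s0 hx0
  have h2 := hc.Phi2til_pos hs0 hx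
  have h3 := hc.H2til_pos hs0 hx
  unfold G2til
  positivity

theorem antitoneOn_G2til (hc : PosCst c) (hs0 : 0 < s0) : AntitoneOn (G2til c s0) (Ioi s0) := by
  intro x (hx : s0 < x) y (hy : s0 < y) hxy
  obtain ⟨ha, hD2, hL2m, hL2M, hN2M, hK2M, hK1m, hK1M, hKt1, hKt2, hLt2, hNt2,
    hμ, hμ1, hμ2, h2μ2, h3μ2, hk1, hk2, hk3⟩ := hc.consts_pos
  have hx0 := hs0.trans hx
  have h1x := hc.H2sup_pos s0 hx0
  have h1 := hc.antitoneOn_H2sup hs0 hx hy hxy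
  have h2y := hc.Phi2til_pos hs0 hy
  have h2 := hc.antitoneOn_Phi2til hs0 hx hy hxy
  have h3x := hc.H2til_pos hs0 hx
  have h3 := hc.antitoneOn_H2til hs0 hx hy hxy
  unfold G2til
  gcongr

theorem eps22_pos (hc : PosCst c) (hs0 : 0 < s0) (hx : s0 < x) : 0 < eps22 c s0 x := by
  have hx0 := hs0.trans hx
  have h1 := hc.G2til_pos hs0 hx
  have h2 := hc.G2sup_pos s0 hx0
  have h3 := hc.Hsup_pos hs0 hx0
  have h4 := hc.Htil_pos hs0 hx0
  have h5 := hc.Hinf_pos hs0 hx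
  unfold eps22
  positivity

theorem antitoneOn_eps22 (hc : PosCst c) (hs0 : 0 < s0) : AntitoneOn (eps22 c s0) (Ioi s0) := by
  intro x (hx : s0 < x) y (hy : s0 < y) hxy
  have hx0 := hs0.trans hx
  have hy0 := hs0.trans hy
  have hHx := hc.Hinf_pos hs0 hx
  have hH := hc.monotoneOn_Hinf s0 hx0 hy0 hxy
  have h1x := hc.G2til_pos hs0 hx
  have h1 := hc.antitoneOn_G2til hs0 hx hy hxy
  have h2x := hc.G2sup_pos s0 hx0
  have h2 := hc.antitoneOn_G2sup hs0 hx hy hxy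
  have h3x := hc.Hsup_pos hs0 hx0
  have h3y := hc.Hsup_pos hs0 hy0
  have h3 := hc.antitoneOn_Hsup s0 hx0 hy0 hxy
  have h4x := hc.Htil_pos hs0 hx0
  have h4y := hc.Htil_pos hs0 hy0
  have h4 := hc.antitoneOn_Htil s0 hx0 hy0 hxy
  unfold eps22
  gcongr

/-- `Φ̃2` and `Φ2inf(∞)` both vanish at infinity; after cancelling `r0 ^ (μ + ν - 1)` only `E2inf`
is left in the denominator. -/
theorem eps21_eq (hc : PosCst c) (hx : 0 < x) :
    eps21 c s0 x = 2 * (c.L2M / c.L2m) * (E2til c s0 x / E2inf c s0 x)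
      + 2 * c.L2M * c.Lt2 * (c.mu + c.nu - 1) / (c.L2m ^ 2 * (2 * c.mu + c.nu - 1))
        * (x ^ (-c.mu) / E2inf c s0 x) := by
  obtain ⟨ha, hD2, hL2m, hL2M, hN2M, hK2M, hK1m, hK1M, hKt1, hKt2, hLt2, hNt2,
    hμ, hμ1, hμ2, h2μ2, h3μ2, hk1, hk2, hk3⟩ := hc.consts_pos
  have hx1 : 0 < x ^ (c.mu + c.nu - 1) := by positivity
  have hx2 : 0 < x ^ (2 * c.mu + c.nu - 1) := by positivity
  have hpow : x ^ (-c.mu) = x ^ (c.mu + c.nu - 1) / x ^ (2 * c.mu + c.nu - 1) := by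
    rw [← Real.rpow_sub hx]
    ring_nf
  unfold eps21 Phi2til Phi2infC
  rw [hpow]
  field_simp

theorem Phi2supC_div_Phi2infC (hc : PosCst c) (hx : 0 < x) :
    Phi2supC c x / Phi2infC c s0 x = c.L2M / (c.L2m * E2inf c s0 x) := by
  obtain ⟨ha, hD2, hL2m, hL2M, hN2M, hK2M, hK1m, hK1M, hKt1, hKt2, hLt2, hNt2,
    hμ, hμ1, hμ2, h2μ2, h3μ2, hk1, hk2, hk3⟩ := hc.consts_pos
  have hx1 : 0 < x ^ (c.mu + c.nu - 1) := by positivity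
  unfold Phi2supC Phi2infC
  field_simp

theorem eps21_pos (hc : PosCst c) (hs0 : 0 < s0) (hx : s0 < x) : 0 < eps21 c s0 x := by
  obtain ⟨ha, hD2, hL2m, hL2M, hN2M, hK2M, hK1m, hK1M, hKt1, hKt2, hLt2, hNt2,
    hμ, hμ1, hμ2, h2μ2, h3μ2, hk1, hk2, hk3⟩ := hc.consts_pos
  have hx0 := hs0.trans hx
  have hEt := hc.E2til_pos hs0 hx
  have hE := E2inf_pos c s0 x
  rw [hc.eps21_eq hx0]
  positivity

theorem strictAntiOn_eps21 (hc : PosCst c) (hs0 : 0 < s0) :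
    StrictAntiOn (eps21 c s0) (Ioi s0) := by
  intro x (hx : s0 < x) y (hy : s0 < y) hxy
  obtain ⟨ha, hD2, hL2m, hL2M, hN2M, hK2M, hK1m, hK1M, hKt1, hKt2, hLt2, hNt2,
    hμ, hμ1, hμ2, h2μ2, h3μ2, hk1, hk2, hk3⟩ := hc.consts_pos
  have hx0 := hs0.trans hx
  have hy0 := hs0.trans hy
  have hEx := E2inf_pos c s0 x
  have hE := hc.monotoneOn_E2inf hs0 hx hy hxy.le
  have hEtx := hc.E2til_pos hs0 hx
  have hEt := hc.antitoneOn_E2til hs0 hx hy hxy.le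
  have hpow : y ^ (-c.mu) < x ^ (-c.mu) := Real.rpow_lt_rpow_of_neg hx0 hxy (neg_neg_of_pos hμ)
  rw [hc.eps21_eq hx0, hc.eps21_eq hy0]
  exact add_lt_add_of_le_of_lt (by gcongr) (by gcongr)

theorem eps23_pos (hc : PosCst c) (hs0 : 0 < s0) (hx : s0 < x) : 0 < eps23 c s0 x := by
  obtain ⟨ha, hD2, hL2m, hL2M, hN2M, hK2M, hK1m, hK1M, hKt1, hKt2, hLt2, hNt2,
    hμ, hμ1, hμ2, h2μ2, h3μ2, hk1, hk2, hk3⟩ := hc.consts_pos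
  have hx0 := hs0.trans hx
  have hE := E2inf_pos c s0 x
  have h1 := hc.eps22_pos hs0 hx
  have h2 := hc.G2sup_pos s0 hx0
  have h4 := hc.eps21_pos hs0 hx
  unfold eps23
  rw [hc.Phi2supC_div_Phi2infC hx0]
  positivity

theorem antitoneOn_eps23 (hc : PosCst c) (hs0 : 0 < s0) : AntitoneOn (eps23 c s0) (Ioi s0) := by
  intro x (hx : s0 < x) y (hy : s0 < y) hxy
  obtain ⟨ha, hD2, hL2m, hL2M, hN2M, hK2M, hK1m, hK1M, hKt1, hKt2, hLt2, hNt2,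
    hμ, hμ1, hμ2, h2μ2, h3μ2, hk1, hk2, hk3⟩ := hc.consts_pos
  have hx0 := hs0.trans hx
  have hy0 := hs0.trans hy
  have hEx := E2inf_pos c s0 x
  have hE := hc.monotoneOn_E2inf hs0 hx hy hxy
  have h1y := hc.eps22_pos hs0 hy
  have h1 := hc.antitoneOn_eps22 hs0 hx hy hxy
  have h2x := hc.G2sup_pos s0 hx0
  have h2 := hc.antitoneOn_G2sup hs0 hx hy hxy
  have h3 := hc.Hinf_pos hs0 hx
  have h3' := hc.monotoneOn_Hinf s0 hx0 hy0 hxy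
  have h4y := hc.eps21_pos hs0 hy
  have h4 := (hc.strictAntiOn_eps21 hs0).antitoneOn hx hy hxy
  unfold eps23
  rw [hc.Phi2supC_div_Phi2infC hx0, hc.Phi2supC_div_Phi2infC hy0]
  gcongr

theorem strictAntiOn_eps2 (hc : PosCst c) (hs0 : 0 < s0) : StrictAntiOn (eps2 c s0) (Ioi s0) :=
  fun _ hx _ hy hxy => add_lt_add_of_lt_of_le
    (add_lt_add_of_lt_of_le (hc.strictAntiOn_eps21 hs0 hx hy hxy)
      (hc.antitoneOn_eps22 hs0 hx hy hxy.le))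
    (hc.antitoneOn_eps23 hs0 hx hy hxy.le)

theorem continuousOn_eps2 (hc : PosCst c) (hs0 : 0 < s0) : ContinuousOn (eps2 c s0) (Ioi s0) := by
  intro x (hx : s0 < x)
  obtain ⟨ha, hD2, hL2m, hL2M, hN2M, hK2M, hK1m, hK1M, hKt1, hKt2, hLt2, hNt2,
    hμ, hμ1, hμ2, h2μ2, h3μ2, hk1, hk2, hk3⟩ := hc.consts_pos
  have hx0 := hs0.trans hx
  have hH := sub_pos.2 (Real.rpow_lt_rpow_of_neg hs0 hx (neg_neg_of_pos hk1))
  refine ContinuousAt.continuousWithinAt ?_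
  unfold eps2 eps23 eps21 eps22 G2til G2sup H2til H2sup Phi2til Phi2infC Phi2supC
    E2til E2inf Htil Hsup Hinf
  fun_prop (disch := first | positivity | exact Or.inl (by positivity))

theorem HinfI_pos (hc : PosCst c) (hs0 : 0 < s0) : 0 < HinfI c s0 := by
  obtain ⟨ha, hD2, hL2m, hL2M, hN2M, hK2M, hK1m, hK1M, hKt1, hKt2, hLt2, hNt2,
    hμ, hμ1, hμ2, h2μ2, h3μ2, hk1, hk2, hk3⟩ := hc.consts_pos
  unfold HinfI
  positivity

theorem tendsto_Hinf_atTop (hc : PosCst c) (s0 : ℝ) :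
    Tendsto (Hinf c s0) atTop (𝓝 (HinfI c s0)) := by
  obtain ⟨ha, hD2, hL2m, hL2M, hN2M, hK2M, hK1m, hK1M, hKt1, hKt2, hLt2, hNt2,
    hμ, hμ1, hμ2, h2μ2, h3μ2, hk1, hk2, hk3⟩ := hc.consts_pos
  unfold Hinf HinfI
  simpa using (tendsto_const_nhds.sub (tendsto_rpow_neg_atTop hk1)).const_mul
    (c.K1m / (c.mu + c.nu - 1))

theorem tendsto_Hsup_atTop (hc : PosCst c) (s0 : ℝ) :
    Tendsto (Hsup c s0) atTop (𝓝 (HsupI c s0)) := by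
  obtain ⟨ha, hD2, hL2m, hL2M, hN2M, hK2M, hK1m, hK1M, hKt1, hKt2, hLt2, hNt2,
    hμ, hμ1, hμ2, h2μ2, h3μ2, hk1, hk2, hk3⟩ := hc.consts_pos
  unfold Hsup HsupI
  simpa using (tendsto_const_nhds.add
    ((tendsto_rpow_neg_atTop hk1).const_mul c.K2M)).div_const (c.mu + c.nu - 1)

theorem tendsto_Htil_atTop (hc : PosCst c) (s0 : ℝ) :
    Tendsto (Htil c s0) atTop (𝓝 (HtilI c s0)) := by
  obtain ⟨ha, hD2, hL2m, hL2M, hN2M, hK2M, hK1m, hK1M, hKt1, hKt2, hLt2, hNt2,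
    hμ, hμ1, hμ2, h2μ2, h3μ2, hk1, hk2, hk3⟩ := hc.consts_pos
  unfold Htil HtilI
  simpa using (tendsto_const_nhds.add
    ((tendsto_rpow_neg_atTop hk1).const_mul c.Kt2)).div_const (c.mu + c.nu - 1)

theorem tendsto_Hinf_mul_rpow_atTop (hc : PosCst c) (hs0 : 0 < s0) {k p : ℝ} (hk : 0 < k)
    (hp : 0 < p) : Tendsto (fun r : ℝ => Hinf c s0 r * k * r ^ p) atTop atTop :=
  ((hc.tendsto_Hinf_atTop s0).mul_const k).pos_mul_atTop
    (mul_pos (hc.HinfI_pos hs0) hk) (tendsto_rpow_atTop hp)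

theorem tendsto_E2inf_atTop (hc : PosCst c) (hs0 : 0 < s0) :
    Tendsto (E2inf c s0) atTop (𝓝 1) := by
  obtain ⟨ha, hD2, hL2m, hL2M, hN2M, hK2M, hK1m, hK1M, hKt1, hKt2, hLt2, hNt2,
    hμ, hμ1, hμ2, h2μ2, h3μ2, hk1, hk2, hk3⟩ := hc.consts_pos
  have h1 := tendsto_const_div_mul_rpow_atTop (c.a * c.N2M)
    (by positivity : 0 < c.L2m * (c.mu - 1)) h2μ2
  have h2 := tendsto_const_nhds (x := c.D2 * c.K2M) |>.div_atTop
    (hc.tendsto_Hinf_mul_rpow_atTop hs0 (by positivity : 0 < c.L2m * (2 * c.mu + c.nu - 1)) hk2)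
  unfold E2inf
  simpa [mul_assoc] using (h1.add h2).neg.rexp

theorem tendsto_E2til_atTop (hc : PosCst c) (hs0 : 0 < s0) :
    Tendsto (E2til c s0) atTop (𝓝 0) := by
  obtain ⟨ha, hD2, hL2m, hL2M, hN2M, hK2M, hK1m, hK1M, hKt1, hKt2, hLt2, hNt2,
    hμ, hμ1, hμ2, h2μ2, h3μ2, hk1, hk2, hk3⟩ := hc.consts_pos
  have hHI := hc.HinfI_pos hs0
  have t1 := tendsto_const_div_mul_rpow_atTop c.Nt2 (by positivity : 0 < c.L2m * (c.mu - 2)) hμ2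
  have t2 := tendsto_const_div_mul_rpow_atTop (c.N2M * c.Lt2)
    (by positivity : 0 < c.L2m ^ 2 * (3 * c.mu - 2)) h3μ2
  have t3 := tendsto_const_nhds (x := c.Kt2) |>.div_atTop
    (hc.tendsto_Hinf_mul_rpow_atTop hs0 (by positivity : 0 < c.L2m * (2 * c.mu + c.nu - 1)) hk2)
  have t4 := tendsto_const_nhds (x := c.K2M) |>.div
    ((hc.tendsto_Hinf_atTop s0).mul_const c.L2m) (by positivity)
  have t5 := (hc.tendsto_Htil_atTop s0).div_atTop (hc.tendsto_Hinf_mul_rpow_atTop hs0 hk2 hk2)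
  have t6 := tendsto_const_div_mul_rpow_atTop c.Lt2
    (by positivity : 0 < c.L2m * (3 * c.mu + c.nu - 1)) hk3
  unfold E2til
  simpa [mul_assoc] using
    ((t1.add t2).const_mul (2 * c.a)).add ((t3.add (t4.mul (t5.add t6))).const_mul c.D2)

theorem tendsto_L2m_mul_rpow_atTop (hc : PosCst c) :
    Tendsto (fun r : ℝ => c.L2m * (c.mu + c.nu - 1) * r ^ (c.mu + c.nu - 1)) atTop atTop := by
  obtain ⟨ha, hD2, hL2m, hL2M, hN2M, hK2M, hK1m, hK1M, hKt1, hKt2, hLt2, hNt2,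
    hμ, hμ1, hμ2, h2μ2, h3μ2, hk1, hk2, hk3⟩ := hc.consts_pos
  exact (tendsto_rpow_atTop hk1).const_mul_atTop (by positivity)

theorem tendsto_Phi2til_atTop (hc : PosCst c) (hs0 : 0 < s0) :
    Tendsto (Phi2til c s0) atTop (𝓝 0) := by
  obtain ⟨ha, hD2, hL2m, hL2M, hN2M, hK2M, hK1m, hK1M, hKt1, hKt2, hLt2, hNt2,
    hμ, hμ1, hμ2, h2μ2, h3μ2, hk1, hk2, hk3⟩ := hc.consts_pos
  have t1 := (hc.tendsto_E2til_atTop hs0).div_atTop hc.tendsto_L2m_mul_rpow_atTop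
  have t2 := tendsto_const_div_mul_rpow_atTop c.Lt2
    (by positivity : 0 < c.L2m ^ 2 * (2 * c.mu + c.nu - 1)) hk2
  unfold Phi2til
  simpa using t1.add t2

theorem tendsto_E2inf_mul_rpow_atTop (hc : PosCst c) (hs0 : 0 < s0) :
    Tendsto (fun r : ℝ => E2inf c s0 r * (c.mu + c.nu - 1) * r ^ (c.mu + c.nu - 1))
      atTop atTop := by
  obtain ⟨ha, hD2, hL2m, hL2M, hN2M, hK2M, hK1m, hK1M, hKt1, hKt2, hLt2, hNt2,
    hμ, hμ1, hμ2, h2μ2, h3μ2, hk1, hk2, hk3⟩ := hc.consts_pos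
  exact ((hc.tendsto_E2inf_atTop hs0).mul_const _).pos_mul_atTop (by simpa using hk1)
    (tendsto_rpow_atTop hk1)

theorem tendsto_H2sup_atTop (hc : PosCst c) (hs0 : 0 < s0) :
    Tendsto (H2sup c s0) atTop (𝓝 0) :=
  tendsto_const_nhds.div_atTop (hc.tendsto_E2inf_mul_rpow_atTop hs0)

theorem tendsto_H2til_atTop (hc : PosCst c) (hs0 : 0 < s0) :
    Tendsto (H2til c s0) atTop (𝓝 0) :=
  (tendsto_const_nhds.add (((hc.tendsto_E2til_atTop hs0).const_mul c.K2M).div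
    (hc.tendsto_E2inf_atTop hs0) one_ne_zero)).div_atTop (hc.tendsto_E2inf_mul_rpow_atTop hs0)

theorem tendsto_G2sup_atTop (hc : PosCst c) (hs0 : 0 < s0) :
    Tendsto (G2sup c s0) atTop (𝓝 0) :=
  (hc.tendsto_H2sup_atTop hs0).div_atTop hc.tendsto_L2m_mul_rpow_atTop

theorem tendsto_G2til_atTop (hc : PosCst c) (hs0 : 0 < s0) :
    Tendsto (G2til c s0) atTop (𝓝 0) := by
  unfold G2til
  simpa using ((hc.tendsto_H2sup_atTop hs0).mul (hc.tendsto_Phi2til_atTop hs0)).add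
    ((hc.tendsto_H2til_atTop hs0).div_atTop hc.tendsto_L2m_mul_rpow_atTop)

theorem tendsto_eps21_atTop (hc : PosCst c) (hs0 : 0 < s0) :
    Tendsto (eps21 c s0) atTop (𝓝 0) := by
  obtain ⟨ha, hD2, hL2m, hL2M, hN2M, hK2M, hK1m, hK1M, hKt1, hKt2, hLt2, hNt2,
    hμ, hμ1, hμ2, h2μ2, h3μ2, hk1, hk2, hk3⟩ := hc.consts_pos
  have hE := hc.tendsto_E2inf_atTop hs0
  have t1 := ((hc.tendsto_E2til_atTop hs0).div hE one_ne_zero).const_mul (2 * (c.L2M / c.L2m))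
  have t2 := ((tendsto_rpow_neg_atTop hμ).div hE one_ne_zero).const_mul
    (2 * c.L2M * c.Lt2 * (c.mu + c.nu - 1) / (c.L2m ^ 2 * (2 * c.mu + c.nu - 1)))
  refine Tendsto.congr' ?_ (by simpa using t1.add t2)
  filter_upwards [eventually_gt_atTop 0] with r hr
  exact (hc.eps21_eq hr).symm

theorem tendsto_eps22_atTop (hc : PosCst c) (hs0 : 0 < s0) :
    Tendsto (eps22 c s0) atTop (𝓝 0) := by
  have hH := hc.tendsto_Hinf_atTop s0
  have hHI := (hc.HinfI_pos hs0).ne'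
  have t1 := (hc.tendsto_G2til_atTop hs0).div (hH.pow 2) (pow_ne_zero 2 hHI)
  have t2 := ((((hc.tendsto_G2sup_atTop hs0).const_mul 2).mul (hc.tendsto_Hsup_atTop s0)).mul
    (hc.tendsto_Htil_atTop s0)).div (hH.pow 4) (pow_ne_zero 4 hHI)
  unfold eps22
  simpa using t1.add t2

theorem tendsto_eps23_atTop (hc : PosCst c) (hs0 : 0 < s0) :
    Tendsto (eps23 c s0) atTop (𝓝 0) := by
  obtain ⟨ha, hD2, hL2m, hL2M, hN2M, hK2M, hK1m, hK1M, hKt1, hKt2, hLt2, hNt2,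
    hμ, hμ1, hμ2, h2μ2, h3μ2, hk1, hk2, hk3⟩ := hc.consts_pos
  have hHI := (hc.HinfI_pos hs0).ne'
  have t1 := (tendsto_const_nhds (x := c.L2M)).div ((hc.tendsto_E2inf_atTop hs0).const_mul c.L2m)
    (by simpa using hL2m.ne')
  have t2 := (hc.tendsto_G2sup_atTop hs0).div ((hc.tendsto_Hinf_atTop s0).pow 2)
    (pow_ne_zero 2 hHI)
  refine Tendsto.congr' ?_
    (by simpa using (t1.mul (hc.tendsto_eps22_atTop hs0)).add (t2.mul (hc.tendsto_eps21_atTop hs0)))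
  filter_upwards [eventually_gt_atTop 0] with r hr
  rw [eps23, hc.Phi2supC_div_Phi2infC hr]

theorem tendsto_eps2_atTop (hc : PosCst c) (hs0 : 0 < s0) :
    Tendsto (eps2 c s0) atTop (𝓝 0) := by
  unfold eps2
  simpa using ((hc.tendsto_eps21_atTop hs0).add (hc.tendsto_eps22_atTop hs0)).add
    (hc.tendsto_eps23_atTop hs0)

theorem tendsto_inv_E2inf_nhdsGT (hc : PosCst c) (hs0 : 0 < s0) :
    Tendsto (fun r => (E2inf c s0 r)⁻¹) (𝓝[>] s0) atTop := by
  obtain ⟨ha, hD2, hL2m, hL2M, hN2M, hK2M, hK1m, hK1M, hKt1, hKt2, hLt2, hNt2,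
    hμ, hμ1, hμ2, h2μ2, h3μ2, hk1, hk2, hk3⟩ := hc.consts_pos
  have hden : Tendsto (fun r : ℝ => Hinf c s0 r * c.L2m * (2 * c.mu + c.nu - 1)
      * r ^ (2 * c.mu + c.nu - 1)) (𝓝[>] s0) (𝓝[>] 0) := by
    refine tendsto_nhdsWithin_of_tendsto_nhds_of_eventually_within _ ?_ ?_
    · simpa using (((tendsto_Hinf_nhdsGT c hs0).mul_const c.L2m).mul_const _).mul
        ((Real.continuousAt_rpow_const s0 _ (Or.inl hs0.ne')).tendsto.mono_left
          nhdsWithin_le_nhds)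
    · filter_upwards [self_mem_nhdsWithin] with r (hr : s0 < r)
      have hH := hc.Hinf_pos hs0 hr
      have hr0 := hs0.trans hr
      rw [mem_Ioi]
      positivity
  have hexponent := Tendsto.zero_eventuallyLE_add_atTop
    (f := fun r : ℝ => c.a * c.N2M / (c.L2m * (c.mu - 1) * r ^ (2 * c.mu - 2)))
    (eventually_mem_nhdsWithin.mono fun r (hr : s0 < r) => by
      have hr0 := hs0.trans hr
      simp only [Pi.zero_apply]
      positivity)
    ((tendsto_inv_nhdsGT_zero.comp hden).const_mul_atTop (mul_pos hD2 hK2M))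
  refine (Real.tendsto_exp_atTop.comp hexponent).congr fun r => ?_
  simp only [Function.comp_apply, E2inf, Real.exp_neg, inv_inv, div_eq_mul_inv]

theorem tendsto_eps2_nhdsGT (hc : PosCst c) (hs0 : 0 < s0) :
    Tendsto (eps2 c s0) (𝓝[>] s0) atTop := by
  obtain ⟨ha, hD2, hL2m, hL2M, hN2M, hK2M, hK1m, hK1M, hKt1, hKt2, hLt2, hNt2,
    hμ, hμ1, hμ2, h2μ2, h3μ2, hk1, hk2, hk3⟩ := hc.consts_pos
  set B := 2 * c.L2M * c.Lt2 * (c.mu + c.nu - 1) / (c.L2m ^ 2 * (2 * c.mu + c.nu - 1))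
    with hB_def
  have hpow : Tendsto (fun r : ℝ => B * r ^ (-c.mu)) (𝓝[>] s0) (𝓝 (B * s0 ^ (-c.mu))) :=
    ((Real.continuousAt_rpow_const s0 _ (Or.inl hs0.ne')).tendsto.mono_left
      nhdsWithin_le_nhds).const_mul B
  refine tendsto_atTop_mono' _ ?_
    (hpow.pos_mul_atTop (by positivity) (hc.tendsto_inv_E2inf_nhdsGT hs0))
  filter_upwards [self_mem_nhdsWithin] with r (hr : s0 < r)
  have hEt := hc.E2til_pos hs0 hr
  have hE := E2inf_pos c s0 r
  have h22 := hc.eps22_pos hs0 hr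
  have h23 := hc.eps23_pos hs0 hr
  have hfirst : 0 ≤ 2 * (c.L2M / c.L2m) * (E2til c s0 r / E2inf c s0 r) := by positivity
  have hsplit : B * r ^ (-c.mu) * (E2inf c s0 r)⁻¹ = B * (r ^ (-c.mu) / E2inf c s0 r) := by
    ring
  rw [eps2, hc.eps21_eq (hs0.trans hr), ← hB_def]
  linarith

end PosCst

theorem stmt18 (c : Cst) (hpos : PosCst c) (s0 : ℝ) (hs0 : 0 < s0) :
    StrictAntiOn (eps2 c s0) (Set.Ioi s0) ∧
    Tendsto (eps2 c s0) (𝓝[>] s0) atTop ∧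
    Tendsto (eps2 c s0) atTop (𝓝 0) ∧
    ∃ r2, s0 < r2 ∧ eps2 c s0 r2 = 1 ∧ ∀ r0, r2 < r0 → eps2 c s0 r0 < 1 :=
  ⟨hpos.strictAntiOn_eps2 hs0, hpos.tendsto_eps2_nhdsGT hs0, hpos.tendsto_eps2_atTop hs0,
    (hpos.strictAntiOn_eps2 hs0).exists_eq_forall_lt_of_tendsto (hpos.continuousOn_eps2 hs0)
      (hpos.tendsto_eps2_nhdsGT hs0) (hpos.tendsto_eps2_atTop hs0) one_pos⟩
end
end
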